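/- arXiv:1812.09921 — 12 statements merged into one kernel-verified Lean document; each statement's English description precedes it below -/
import Mathlib

section
/- Let G be a group and d a positive integer. If a subgroup H of G of finite index admits a simple virtual endomorphism of index d (a homomorphism φ: D → H from a finite-index subgroup D ≤ H with [H:D] = d such that no nontrivial normal subgroup N of H satisfies N ⊆ D and φ(N) ⊆ N), then G admits a simple virtual endomorphism of index d·[G:H]. -/
/-- A virtual endomorphism `φ : D → G` (with `D` a finite-index subgroup) is *simple*
if no nontrivial normal subgroup `N` of `G` satisfies `N ⊆ D` and `φ(N) ⊆ N`. -/
def IsSimpleVE {G : Type*} [Group G] (D : Subgroup G) (φ : D →* G) : Prop :=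
  ∀ N : Subgroup G, N.Normal → ∀ hN : N ≤ D,
    (∀ x (hx : x ∈ N), φ ⟨x, hN hx⟩ ∈ N) → N = ⊥

theorem stmt0 {G : Type*} [Group G] (H : Subgroup G) (hH : H.index ≠ 0)
    (d : ℕ) (hd : 0 < d) (D : Subgroup H) (φ : D →* H)
    (hidx : D.index = d) (hsimple : IsSimpleVE D φ) :
    ∃ (D' : Subgroup G) (ψ : D' →* G), D'.index = d * H.index ∧ IsSimpleVE D' ψ := by
  refine ⟨D.map H.subtype,
    H.subtype.comp (φ.comp
      ((Subgroup.equivMapOfInjective D H.subtype H.subtype_injective).symm.toMonoidHom)), ?_, ?_⟩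
  · rw [Subgroup.index_map_subtype, hidx]
  · intro N hNnorm hND hNinv
    have hNH : N ≤ H := hND.trans (Subgroup.map_subtype_le D)
    have hMD : N.subgroupOf H ≤ D := by
      intro x hx
      obtain ⟨y, hy, hyx⟩ := hND hx
      have : y = x := Subtype.ext hyx
      rwa [← this]
    have hM : N.subgroupOf H = ⊥ := by
      refine hsimple (N.subgroupOf H) inferInstance hMD ?_
      intro x hx
      have hxN : (x : G) ∈ N := hx
      have h1 := hNinv (x : G) hxN
      simp only [MonoidHom.comp_apply, MulEquiv.coe_toMonoidHom] at h1
      have key : (D.equivMapOfInjective H.subtype H.subtype_injective).symm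
          ⟨(x : G), hND hxN⟩ = ⟨x, hMD hx⟩ := by
        rw [MulEquiv.symm_apply_eq]
        ext
        exact (D.coe_equivMapOfInjective_apply H.subtype H.subtype_injective ⟨x, hMD hx⟩).symm
      rw [key] at h1
      exact h1
    have : Disjoint N H := Subgroup.subgroupOf_eq_bot.mp hM
    exact le_bot_iff.mp ((le_inf le_rfl hNH).trans this.le_bot)
end

section
/- The additive group ℤ_p of p-adic integers admits, for every integer k ≥ 1, a simple virtual endomorphism of index p^k, namely φ: p^kℤ_p → ℤ_p given by φ(a) = p^{-k}a: the only subgroup N of ℤ_p with N ⊆ p^kℤ_p and φ(N) ⊆ N is the trivial subgroup. -/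
/-!
The map `φ` is division by `p ^ k`, the inverse of the injective map `a ↦ p ^ k * a` on its range.
If `N` is `φ`-invariant, every `x ∈ N` is `p ^ k` times another element of `N`, so iterating,
`x` is divisible by every power of `p` and hence is `0`. The index is that of the kernel of
reduction `ℤ_[p] → ZMod (p ^ k)`.
-/

open PadicInt

theorem pow_dvd_of_forall_mem_exists_mul {M : Type*} [Monoid M] {S : Set M} {c : M}
    (hS : ∀ x ∈ S, ∃ y ∈ S, x = c * y) (n : ℕ) {x : M} (hx : x ∈ S) : c ^ n ∣ x := by
  induction n generalizing x with
  | zero => rw [pow_zero]; exact one_dvd x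
  | succ n ih =>
    obtain ⟨y, hy, rfl⟩ := hS x hx
    rw [pow_succ']
    exact mul_dvd_mul_left c (ih hy)

namespace PadicInt

variable {p : ℕ} [Fact p.Prime]

theorem eq_zero_of_forall_p_pow_dvd {x : ℤ_[p]} (hx : ∀ n : ℕ, (p : ℤ_[p]) ^ n ∣ x) :
    x = 0 := by
  by_contra hx0
  have := (mem_span_pow_iff_le_valuation x hx0 (x.valuation + 1)).1
    (Ideal.mem_span_singleton.2 (hx _))
  omega

theorem range_mulLeft_p_pow_eq_ker_toZModPow (k : ℕ) :
    (AddMonoidHom.mulLeft ((p : ℤ_[p]) ^ k)).range =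
      (toZModPow k : ℤ_[p] →+* ZMod (p ^ k)).toAddMonoidHom.ker := by
  ext x
  change _ ↔ x ∈ RingHom.ker (toZModPow k : ℤ_[p] →+* ZMod (p ^ k))
  rw [ker_toZModPow, Ideal.mem_span_singleton, dvd_iff_exists_eq_mul_right]
  simp [eq_comm]

theorem index_range_mulLeft_p_pow (k : ℕ) :
    (AddMonoidHom.mulLeft ((p : ℤ_[p]) ^ k)).range.index = p ^ k := by
  rw [range_mulLeft_p_pow_eq_ker_toZModPow, AddSubgroup.index_ker,
    AddMonoidHom.range_eq_top.2 (ZMod.ringHom_surjective _), AddSubgroup.card_top,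
    Nat.card_zmod]

end PadicInt

theorem stmt1 (p : ℕ) [Fact p.Prime] (k : ℕ) (hk : 1 ≤ k) :
    ∃ φ : (AddMonoidHom.mulLeft ((p : ℤ_[p]) ^ k)).range →+ ℤ_[p],
      (∀ a : ℤ_[p], φ ⟨(p : ℤ_[p]) ^ k * a, ⟨a, rfl⟩⟩ = a) ∧
      (AddMonoidHom.mulLeft ((p : ℤ_[p]) ^ k)).range.index = p ^ k ∧
      ∀ N : AddSubgroup ℤ_[p],
        ∀ hN : N ≤ (AddMonoidHom.mulLeft ((p : ℤ_[p]) ^ k)).range,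
          (∀ x (hx : x ∈ N), φ ⟨x, hN hx⟩ ∈ N) → N = ⊥ := by
  have hinj : Function.Injective (AddMonoidHom.mulLeft ((p : ℤ_[p]) ^ k)) :=
    mul_right_injective₀ (pow_ne_zero k (Nat.cast_ne_zero.2 (Fact.out : p.Prime).ne_zero))
  let φ := (AddMonoidHom.ofInjective hinj).symm
  refine ⟨φ.toAddMonoidHom, φ.apply_symm_apply, index_range_mulLeft_p_pow k,
    fun N hN hφN => (AddSubgroup.eq_bot_iff_forall N).2 fun x hx => ?_⟩
  have hN_div : ∀ x ∈ (N : Set ℤ_[p]), ∃ y ∈ (N : Set ℤ_[p]), x = (p : ℤ_[p]) ^ k * y :=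
    fun x hx => ⟨_, hφN x hx, (AddMonoidHom.apply_ofInjective_symm hinj ⟨x, hN hx⟩).symm⟩
  refine eq_zero_of_forall_p_pow_dvd fun n => ?_
  calc (p : ℤ_[p]) ^ n ∣ (p : ℤ_[p]) ^ (k * n) := pow_dvd_pow _ (Nat.le_mul_of_pos_left n hk)
    _ = ((p : ℤ_[p]) ^ k) ^ n := pow_mul _ _ _
    _ ∣ x := pow_dvd_of_forall_mem_exists_mul hN_div n hx
end

section
/- Let p be a prime and let G = ℤ_p × ℤ_p be the free abelian pro-p group of rank 2, with topological generators x, y. For any k ≥ 1, the homomorphism φ from the subgroup D generated by x^{p^k} and y to G determined by φ(x^{p^k}) = y and φ(y) = x is a simple virtual endomorphism of index p^k: no nontrivial subgroup N of G satisfies N ⊆ D and φ(N) ⊆ N. -/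
lemma stmt2_aux (p : ℕ) [Fact p.Prime] (x : ℤ_[p]) (h : ∀ n : ℕ, ((p : ℤ_[p])) ^ n ∣ x) :
    x = 0 := by
  have hp1 : (1 : ℝ) < p := by exact_mod_cast (Fact.out (p := p.Prime)).one_lt
  have hb : ∀ n : ℕ, ‖x‖ ≤ ((p : ℝ)⁻¹) ^ n := by
    intro n
    have h1 : ‖x‖ ≤ (p : ℝ) ^ (-(n : ℤ)) :=
      (PadicInt.norm_le_pow_iff_mem_span_pow x n).mpr (Ideal.mem_span_singleton.mpr (h n))
    calc ‖x‖ ≤ (p : ℝ) ^ (-(n : ℤ)) := h1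
    _ = ((p : ℝ)⁻¹) ^ n := by rw [zpow_neg, inv_pow, zpow_natCast]
  have h0 : Filter.Tendsto (fun n : ℕ => ((p : ℝ)⁻¹) ^ n) Filter.atTop (nhds 0) := by
    apply tendsto_pow_atTop_nhds_zero_of_lt_one (by positivity)
    rw [inv_lt_one₀ (by positivity)]
    exact hp1
  have hle : ‖x‖ ≤ 0 := ge_of_tendsto' h0 hb
  simpa using le_antisymm hle (norm_nonneg x)

/-- The subgroup `D = p^k ℤ_p × ℤ_p` of `G = ℤ_p × ℤ_p`, generated by `x^{p^k}` and `y`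
where `x = (1,0)` and `y = (0,1)` (written additively). -/
noncomputable def stmt2D (p k : ℕ) [Fact p.Prime] : AddSubgroup (ℤ_[p] × ℤ_[p]) :=
  ((AddMonoidHom.mulLeft ((p : ℤ_[p]) ^ k)).range).prod ⊤

theorem stmt2 (p : ℕ) [Fact p.Prime] (k : ℕ) (hk : 1 ≤ k) :
    ∃ φ : stmt2D p k →+ ℤ_[p] × ℤ_[p],
      (∀ a b : ℤ_[p],
        φ ⟨((p : ℤ_[p]) ^ k * a, b),
            AddSubgroup.mem_prod.mpr ⟨⟨a, rfl⟩, AddSubgroup.mem_top b⟩⟩ = (b, a)) ∧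
      (stmt2D p k).index = p ^ k ∧
      ∀ N : AddSubgroup (ℤ_[p] × ℤ_[p]), ∀ hN : N ≤ stmt2D p k,
        (∀ x (hx : x ∈ N), φ ⟨x, hN hx⟩ ∈ N) → N = ⊥ := by
  classical
  set c : ℤ_[p] := (p : ℤ_[p]) ^ k with hc
  have hp0 : (p : ℤ_[p]) ≠ 0 := Nat.cast_ne_zero.mpr (Fact.out (p := p.Prime)).ne_zero
  have hc0 : c ≠ 0 := pow_ne_zero _ hp0
  have hinj : Function.Injective (AddMonoidHom.mulLeft c) := by
    intro a b h
    exact mul_left_cancel₀ hc0 h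
  set f := AddMonoidHom.mulLeft c with hf
  set e : ℤ_[p] ≃+ f.range := AddMonoidHom.ofInjective hinj with he
  set D := stmt2D p k with hD
  have hmem : ∀ d : D, (d : ℤ_[p] × ℤ_[p]).1 ∈ f.range := fun d =>
    (AddSubgroup.mem_prod.mp d.2).1
  set π₁ : D →+ ℤ_[p] := (AddMonoidHom.fst _ _).comp D.subtype with hπ₁
  set π₂ : D →+ ℤ_[p] := (AddMonoidHom.snd _ _).comp D.subtype with hπ₂
  set r : D →+ f.range := π₁.codRestrict _ hmem with hr
  set φ : D →+ ℤ_[p] × ℤ_[p] := π₂.prod (e.symm.toAddMonoidHom.comp r) with hφ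
  have hspec : ∀ (a b : ℤ_[p]) (h : ((c * a, b) : ℤ_[p] × ℤ_[p]) ∈ D),
      φ ⟨(c * a, b), h⟩ = (b, a) := by
    intro a b h
    have h1 : e a = ⟨c * a, ⟨a, rfl⟩⟩ := by
      ext
      exact (AddMonoidHom.ofInjective_apply hinj).symm ▸ rfl
    have h2 : e.symm ⟨c * a, ⟨a, rfl⟩⟩ = a := by rw [← h1, AddEquiv.symm_apply_apply]
    simp only [hφ, AddMonoidHom.prod_apply, AddMonoidHom.comp_apply]
    refine Prod.ext rfl ?_
    show e.symm (r ⟨(c * a, b), h⟩) = a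
    rw [show (r ⟨(c * a, b), h⟩ : f.range) = ⟨c * a, ⟨a, rfl⟩⟩ from Subtype.ext rfl, h2]
  refine ⟨φ, fun a b => hspec a b _, ?_, ?_⟩
  · -- index computation
    haveI : NeZero (p ^ k) := ⟨pow_ne_zero k (Fact.out (p := p.Prime)).ne_zero⟩
    set g : ℤ_[p] →+ ZMod (p ^ k) := (PadicInt.toZModPow k).toAddMonoidHom with hg
    have hsurj : Function.Surjective g := fun z =>
      ⟨((z.val : ℕ) : ℤ_[p]), by
        show PadicInt.toZModPow k _ = z
        rw [map_natCast, ZMod.natCast_zmod_val]⟩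
    have hker : g.ker = f.range := by
      ext x
      have hx : x ∈ g.ker ↔ x ∈ RingHom.ker (PadicInt.toZModPow (p := p) k) := Iff.rfl
      rw [hx, PadicInt.ker_toZModPow, Ideal.mem_span_singleton]
      constructor
      · rintro ⟨a, ha⟩; exact ⟨a, ha.symm⟩
      · rintro ⟨a, ha⟩; exact ⟨a, ha.symm⟩
    have h1 : f.range.index = p ^ k := by
      rw [AddSubgroup.index, ← hker,
        Nat.card_congr (QuotientAddGroup.quotientKerEquivOfSurjective g hsurj).toEquiv,
        Nat.card_zmod]
    show (f.range.prod ⊤).index = p ^ k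
    simp [h1]
  · -- simplicity
    intro N hN hinv
    have step : ∀ z : ℤ_[p] × ℤ_[p], z ∈ N → ∃ a : ℤ_[p], c * a = z.1 ∧
        ((z.2, a) : ℤ_[p] × ℤ_[p]) ∈ N := by
      intro z hz
      obtain ⟨⟨a, ha⟩, -⟩ := AddSubgroup.mem_prod.mp (hN hz)
      have ha' : c * a = z.1 := ha
      have h' : ((c * a, z.2) : ℤ_[p] × ℤ_[p]) ∈ D :=
        AddSubgroup.mem_prod.mpr ⟨⟨a, rfl⟩, AddSubgroup.mem_top _⟩
      have hzeq : (⟨z, hN hz⟩ : D) = ⟨(c * a, z.2), h'⟩ :=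
        Subtype.ext (Prod.ext ha'.symm rfl)
      have hw := hinv z hz
      rw [hzeq, hspec a z.2 h'] at hw
      exact ⟨a, ha', hw⟩
    have main : ∀ n : ℕ, ∀ z : ℤ_[p] × ℤ_[p], z ∈ N → c ^ n ∣ z.1 := by
      intro n
      induction n with
      | zero => intro z _; simp
      | succ n ih =>
        intro z hz
        obtain ⟨a, ha, hw⟩ := step z hz
        obtain ⟨b, hb, hw2⟩ := step _ hw
        have : c ^ n ∣ a := ih _ hw2
        calc c ^ (n + 1) = c * c ^ n := by ring
        _ ∣ c * a := mul_dvd_mul_left c this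
        _ = z.1 := ha
    have hdvd : ∀ z : ℤ_[p] × ℤ_[p], z ∈ N → ∀ n : ℕ, (p : ℤ_[p]) ^ n ∣ z.1 := by
      intro z hz n
      refine dvd_trans ?_ (main n z hz)
      rw [hc, ← pow_mul]
      exact pow_dvd_pow _ (Nat.le_mul_of_pos_left n (by omega))
    rw [eq_bot_iff]
    intro z hz
    obtain ⟨a, ha, hw⟩ := step z hz
    have h1 : z.1 = 0 := stmt2_aux p _ (hdvd z hz)
    have h2 : z.2 = 0 := stmt2_aux p _ (hdvd _ hw)
    have : z = 0 := Prod.ext h1 h2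
    simp [this]
end

section
/- Let L be a 3-dimensional antisymmetric ℤ_p-algebra with basis x and associated matrix A ∈ gl_3(ℤ_p), and let M ⊆ L be a 3-dimensional submodule with basis y whose matrix with respect to x is U (so det U ≠ 0). Set B = det(U)·U^{-1}·A·(U^{-1})^T, a matrix over ℚ_p. Then M is a subalgebra of L if and only if all entries of B lie in ℤ_p, and in that case B is the matrix of the bracket of M with respect to y. -/
/-!
For an alternating bilinear `f` with bracket matrix `A` in the basis `x`, bilinearity gives
`f (∑ aᵢ xᵢ) (∑ bⱼ xⱼ) = ∑ (A (a × b))ᵢ xᵢ`, and the cross product of columns `m + 1` and `m + 2`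
of `U` is row `m` of `adj U`. So the brackets of the `yⱼ` have `x`-coordinates `A adj(U)ᵀ`, and
an integral `C` is a bracket matrix for `y` iff `U C = A adj(U)ᵀ`, i.e. iff `C = B` over `ℚ_p`.
Finally `M` is closed under `f` iff the three brackets of the `yⱼ` lie in `M`, i.e. iff they
have integral `y`-coordinates.
-/

open Matrix

theorem Matrix.map_eq_det_smul_inv_mul_iff {n R K : Type*} [Fintype n] [DecidableEq n]
    [CommRing R] [Field K] {φ : R →+* K} (hφ : Function.Injective φ) {U : Matrix n n R}
    (hU : U.det ≠ 0) (A C : Matrix n n R) :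
    C.map φ = φ U.det • ((U.map φ)⁻¹ * A.map φ * (U.map φ)⁻¹ᵀ) ↔ U * C = A * U.adjugateᵀ := by
  have hdet : (U.map φ).det = φ U.det := (φ.map_det U).symm
  have hdet0 : φ U.det ≠ 0 := (map_ne_zero_iff φ hφ).2 hU
  have hunit : IsUnit (U.map φ).det := hdet ▸ hdet0.isUnit
  have hadj : φ U.det • (U.map φ)⁻¹ = U.adjugate.map φ := by
    rw [inv_def, hdet, Ring.inverse_eq_inv', smul_smul, mul_inv_cancel₀ hdet0, one_smul]
    exact (φ.map_adjugate U).symm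
  have hrhs : φ U.det • ((U.map φ)⁻¹ * A.map φ * (U.map φ)⁻¹ᵀ) =
      (U.map φ)⁻¹ * (A * U.adjugateᵀ).map φ := by
    rw [Matrix.map_mul, transpose_map, ← hadj, transpose_smul, Matrix.mul_smul, Matrix.mul_smul,
      Matrix.mul_assoc]
  have hmap : (U * C).map φ = U.map φ * C.map φ := Matrix.map_mul
  rw [hrhs, ← (map_injective hφ).eq_iff, hmap]
  constructor
  · intro h
    rw [h, mul_nonsing_inv_cancel_left _ _ hunit]
  · intro h
    rw [← h, nonsing_inv_mul_cancel_left _ _ hunit]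

section Bracket

variable {R L : Type*} [CommRing R] [AddCommGroup L] [Module R L]

def IsBracketMatrix (f : L →ₗ[R] L →ₗ[R] L) (v : Fin 3 → L) (A : Matrix (Fin 3) (Fin 3) R) :
    Prop :=
  ∀ m : Fin 3, f (v (m + 1)) (v (m + 2)) = ∑ i, A i m • v i

variable {f : L →ₗ[R] L →ₗ[R] L} {v w : Fin 3 → L} {A U C : Matrix (Fin 3) (Fin 3) R}

theorem isBracketMatrix_iff :
    IsBracketMatrix f v A ↔
      f (v 1) (v 2) = ∑ i, A i 0 • v i ∧ f (v 2) (v 0) = ∑ i, A i 1 • v i ∧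
        f (v 0) (v 1) = ∑ i, A i 2 • v i := by
  simp [IsBracketMatrix, Fin.forall_fin_succ]

theorem IsBracketMatrix.apply_sum_smul (hf : f.IsAlt) (hA : IsBracketMatrix f v A)
    (a b : Fin 3 → R) :
    f (∑ i, a i • v i) (∑ j, b j • v j) = ∑ i, (A *ᵥ (a ⨯₃ b)) i • v i := by
  have h12 : f (v 1) (v 2) = _ := hA 0
  have h20 : f (v 2) (v 0) = _ := hA 1
  have h01 : f (v 0) (v 1) = _ := hA 2
  simp only [Fin.sum_univ_three, map_add, LinearMap.add_apply, map_smul, LinearMap.smul_apply,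
    hf.self_eq_zero, ← hf.neg (v 1) (v 2), ← hf.neg (v 2) (v 0), ← hf.neg (v 0) (v 1), h12, h20,
    h01, cross_apply, mulVec, dotProduct, cons_val_zero, cons_val_one, cons_val_two, head_cons,
    tail_cons]
  module

theorem cross_col_eq_adjugate_row (U : Matrix (Fin 3) (Fin 3) R) (m : Fin 3) :
    (fun i => U i (m + 1)) ⨯₃ (fun i => U i (m + 2)) = U.adjugate m := by
  ext i
  fin_cases m <;> fin_cases i <;> simp [cross_apply, adjugate_fin_three] <;> ring

theorem IsBracketMatrix.apply_eq_sum_mul_adjugate (hf : f.IsAlt) (hA : IsBracketMatrix f v A)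
    (hw : ∀ j, w j = ∑ i, U i j • v i) (m : Fin 3) :
    f (w (m + 1)) (w (m + 2)) = ∑ i, (A * U.adjugateᵀ) i m • v i := by
  rw [hw, hw, hA.apply_sum_smul hf, cross_col_eq_adjugate_row]
  rfl

theorem sum_smul_eq_sum_mul_smul (hw : ∀ j, w j = ∑ i, U i j • v i) (C : Matrix (Fin 3) (Fin 3) R)
    (m : Fin 3) : ∑ a, C a m • w a = ∑ i, (U * C) i m • v i := by
  simp only [hw, Finset.smul_sum, smul_smul, mul_apply, Finset.sum_smul]
  rw [Finset.sum_comm]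
  simp only [mul_comm]

theorem isBracketMatrix_iff_mul_eq (hf : f.IsAlt) (x : Module.Basis (Fin 3) R L)
    (hA : IsBracketMatrix f x A) (hw : ∀ j, w j = ∑ i, U i j • x i) :
    IsBracketMatrix f w C ↔ U * C = A * U.adjugateᵀ := by
  simp only [IsBracketMatrix, hA.apply_eq_sum_mul_adjugate hf hw, sum_smul_eq_sum_mul_smul hw,
    ← x.equivFun_symm_apply, x.equivFun.symm.injective.eq_iff, funext_iff, ← ext_iff]
  rw [forall_comm]
  simp only [eq_comm]

variable {M : Submodule R L}

theorem Submodule.forall_apply_mem_iff_of_basis {ι : Type*} (y : Module.Basis ι R M) :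
    (∀ a ∈ M, ∀ c ∈ M, f a c ∈ M) ↔ ∀ i j, f (y i) (y j) ∈ M := by
  refine ⟨fun h i j => h _ (y i).2 _ (y j).2, fun h => ?_⟩
  have hspan : span R (Set.range fun i => (y i : L)) = M := by
    rw [Set.range_comp', ← M.coe_subtype, span_image, y.span_eq, map_subtype_top]
  have hle : map₂ f (span R (Set.range fun i => (y i : L))) (span R (Set.range fun i => (y i : L)))
      ≤ M := by
    rw [map₂_span_span, span_le]
    rintro _ ⟨_, ⟨i, rfl⟩, _, ⟨j, rfl⟩, rfl⟩
    exact h i j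
  rwa [hspan, map₂_le] at hle

theorem LinearMap.IsAlt.forall_apply_mem_iff_cyclic (hf : f.IsAlt) (v : Fin 3 → L) :
    (∀ i j, f (v i) (v j) ∈ M) ↔ ∀ m : Fin 3, f (v (m + 1)) (v (m + 2)) ∈ M := by
  refine ⟨fun h m => h _ _, fun h i j => ?_⟩
  have h12 := h 0
  have h20 := h 1
  have h01 := h 2
  fin_cases i <;> fin_cases j <;>
    simp_all [hf.self_eq_zero, ← hf.neg (v 1) (v 2), ← hf.neg (v 2) (v 0), ← hf.neg (v 0) (v 1)]

theorem Submodule.exists_isBracketMatrix_iff (y : Module.Basis (Fin 3) R M) :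
    (∃ C, IsBracketMatrix f (fun i => (y i : L)) C) ↔
      ∀ m : Fin 3, f (y (m + 1)) (y (m + 2)) ∈ M := by
  constructor
  · rintro ⟨C, hC⟩ m
    rw [hC m]
    exact sum_mem fun i _ => smul_mem _ _ (y i).2
  · intro h
    refine ⟨fun i m => y.repr ⟨_, h m⟩ i, fun m => ?_⟩
    have hrepr := congrArg M.subtype (y.sum_repr ⟨_, h m⟩)
    simp only [map_sum, map_smul, subtype_apply] at hrepr
    exact hrepr.symm

end Bracket

theorem stmt4 (p : ℕ) [Fact p.Prime] {L : Type*} [AddCommGroup L] [Module ℤ_[p] L]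
    (f : L →ₗ[ℤ_[p]] L →ₗ[ℤ_[p]] L) (hanti : ∀ z : L, f z z = 0)
    (x : Module.Basis (Fin 3) ℤ_[p] L) (A : Matrix (Fin 3) (Fin 3) ℤ_[p])
    (hA : f (x 1) (x 2) = ∑ i : Fin 3, A i 0 • x i ∧
          f (x 2) (x 0) = ∑ i : Fin 3, A i 1 • x i ∧
          f (x 0) (x 1) = ∑ i : Fin 3, A i 2 • x i)
    (M : Submodule ℤ_[p] L) (y : Module.Basis (Fin 3) ℤ_[p] M)
    (U : Matrix (Fin 3) (Fin 3) ℤ_[p])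
    (hU : ∀ j, ((y j : M) : L) = ∑ i : Fin 3, U i j • x i)
    (hdet : U.det ≠ 0)
    (B : Matrix (Fin 3) (Fin 3) ℚ_[p])
    (hB : B = ((U.det : ℚ_[p])) •
        ((U.map ((↑) : ℤ_[p] → ℚ_[p]))⁻¹ * A.map ((↑) : ℤ_[p] → ℚ_[p]) *
          ((U.map ((↑) : ℤ_[p] → ℚ_[p]))⁻¹).transpose)) :
    ((∀ a ∈ M, ∀ c ∈ M, f a c ∈ M) ↔ ∀ i j, ∃ c : ℤ_[p], (c : ℚ_[p]) = B i j) ∧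
    (∀ B' : Matrix (Fin 3) (Fin 3) ℤ_[p], B'.map ((↑) : ℤ_[p] → ℚ_[p]) = B →
      (f (y 1) (y 2) = ∑ i : Fin 3, B' i 0 • ((y i : M) : L) ∧
       f (y 2) (y 0) = ∑ i : Fin 3, B' i 1 • ((y i : M) : L) ∧
       f (y 0) (y 1) = ∑ i : Fin 3, B' i 2 • ((y i : M) : L))) := by
  have hbracket : ∀ C, IsBracketMatrix f (fun i => (y i : L)) C ↔ C.map (↑) = B := fun C => by
    rw [isBracketMatrix_iff_mul_eq hanti x (isBracketMatrix_iff.2 hA) hU, hB]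
    exact (map_eq_det_smul_inv_mul_iff (φ := PadicInt.Coe.ringHom) Subtype.coe_injective hdet
      A C).symm
  refine ⟨?_, fun B' hB' => isBracketMatrix_iff.1 ((hbracket B').2 hB')⟩
  rw [M.forall_apply_mem_iff_of_basis y, LinearMap.IsAlt.forall_apply_mem_iff_cyclic hanti,
    ← M.exists_isBracketMatrix_iff y]
  constructor
  · rintro ⟨C, hC⟩ i j
    exact ⟨C i j, by rw [← (hbracket C).1 hC]; rfl⟩
  · intro h
    choose C hC using h
    exact ⟨C, (hbracket C).2 (Matrix.ext hC)⟩
end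

section
/- Let L be a 3-dimensional antisymmetric ℤ_p-algebra whose matrix with respect to some basis is symmetric. Then L satisfies the Jacobi identity, i.e., L is a Lie algebra over ℤ_p. -/
/-!
The Jacobiator of an alternating bracket is itself an alternating trilinear map, so on a free
module of rank 3 it vanishes as soon as it vanishes at the basis `(x₀, x₁, x₂)`. There its value
is `∑ᵢ ∑ⱼ Aᵢⱼ [xᵢ, xⱼ]`, which is zero because `A` is symmetric and the bracket is alternating.
-/

open Module

section

variable {R M : Type*} [CommRing R] [AddCommGroup M] [Module R M]

theorem AlternatingMap.eq_zero_of_map_basis_eq_zero {N ι : Type*} [AddCommGroup N] [Module R N]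
    [Fintype ι] [DecidableEq ι] (e : Basis ι R M) (g : M [⋀^ι]→ₗ[R] N) (h : g e = 0) :
    g = 0 := by
  refine e.ext_alternating fun v hv => ?_
  let σ : Equiv.Perm ι := Equiv.ofBijective v (Finite.injective_iff_bijective.1 hv)
  change g (e ∘ σ) = 0
  rw [g.map_perm, h, smul_zero]

namespace LinearMap

variable (f : M →ₗ[R] M →ₗ[R] M) (hf : ∀ x, f x x = 0)
include hf

theorem apply_swap_of_alternating (x y : M) : f y x = -f x y := by
  have h := hf (x + y)
  simp only [map_add, add_apply, hf, zero_add, add_zero] at h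
  exact eq_neg_of_add_eq_zero_left h

theorem sum_smul_apply_eq_zero_of_isSymm {ι : Type*} [Fintype ι] {A : Matrix ι ι R}
    (hA : A.IsSymm) (v : ι → M) : ∑ i, ∑ j, A i j • f (v i) (v j) = 0 := by
  classical
  suffices ∀ s : Finset ι, ∑ i ∈ s, ∑ j ∈ s, A i j • f (v i) (v j) = 0 from this Finset.univ
  intro s
  induction s using Finset.induction_on with
  | empty => simp
  | insert a s ha ih =>
    have hcancel : ∑ i ∈ s, A i a • f (v i) (v a) = -∑ j ∈ s, A a j • f (v a) (v j) := by
      rw [← Finset.sum_neg_distrib]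
      refine Finset.sum_congr rfl fun i _ => ?_
      rw [hA.apply a i, apply_swap_of_alternating f hf (v a), smul_neg]
    simp only [Finset.sum_insert ha, hf, smul_zero, zero_add, Finset.sum_add_distrib, ih,
      add_zero, hcancel, add_neg_cancel]

def jacobiator : M [⋀^Fin 3]→ₗ[R] M where
  toFun v := f (f (v 0) (v 1)) (v 2) + f (f (v 2) (v 0)) (v 1) + f (f (v 1) (v 2)) (v 0)
  map_update_add' v i x y := by
    -- `simp` decides `(i : Fin 3) = j` with the canonical instance, not with the bound one
    obtain rfl : ‹DecidableEq (Fin 3)› = instDecidableEqFin 3 := Subsingleton.elim _ _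
    fin_cases i <;> simp <;> abel
  map_update_smul' v i c x := by
    obtain rfl : ‹DecidableEq (Fin 3)› = instDecidableEqFin 3 := Subsingleton.elim _ _
    fin_cases i <;> simp [smul_add]
  map_eq_zero_of_eq' v i j hv hij := by
    fin_cases i <;> fin_cases j <;> simp at hv hij ⊢ <;> rw [hv] <;>
      simp [hf, apply_swap_of_alternating f hf (v 0) (v 1),
        apply_swap_of_alternating f hf (v 0) (v 2), apply_swap_of_alternating f hf (v 1) (v 2)]

theorem jacobiator_apply (v : Fin 3 → M) :
    jacobiator f hf v =
      f (f (v 0) (v 1)) (v 2) + f (f (v 2) (v 0)) (v 1) + f (f (v 1) (v 2)) (v 0) :=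
  rfl

end LinearMap

end

theorem stmt6 (p : ℕ) [Fact p.Prime] {L : Type*} [AddCommGroup L] [Module ℤ_[p] L]
    (f : L →ₗ[ℤ_[p]] L →ₗ[ℤ_[p]] L) (hanti : ∀ z : L, f z z = 0)
    (b : Module.Basis (Fin 3) ℤ_[p] L) (A : Matrix (Fin 3) (Fin 3) ℤ_[p])
    (hA : f (b 1) (b 2) = ∑ i : Fin 3, A i 0 • b i ∧
          f (b 2) (b 0) = ∑ i : Fin 3, A i 1 • b i ∧
          f (b 0) (b 1) = ∑ i : Fin 3, A i 2 • b i)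
    (hsym : A.transpose = A) :
    ∀ x y z : L, f (f x y) z + f (f z x) y + f (f y z) x = 0 := by
  obtain ⟨h12, h20, h01⟩ := hA
  have hbasis : f.jacobiator hanti b = 0 :=
    calc f.jacobiator hanti b
        = ∑ j, f (∑ i, A i j • b i) (b j) := by
          rw [f.jacobiator_apply, Fin.sum_univ_three, ← h12, ← h20, ← h01]; abel
      _ = ∑ i, ∑ j, A i j • f (b i) (b j) := by
          simp only [map_sum, map_smul, LinearMap.sum_apply, LinearMap.smul_apply]
          exact Finset.sum_comm
      _ = 0 := f.sum_smul_apply_eq_zero_of_isSymm hanti hsym b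
  intro x y z
  simpa only [f.jacobiator_apply, Matrix.cons_val_zero, Matrix.cons_val_one, Matrix.cons_val_two,
    Matrix.tail_cons, Matrix.head_cons, AlternatingMap.zero_apply] using
    congr($((f.jacobiator hanti).eq_zero_of_map_basis_eq_zero b hbasis) ![x, y, z])
end

section
/- Let L be a 3-dimensional unsolvable Lie algebra over ℤ_p (free as a ℤ_p-module). Then the matrix of L with respect to any basis is symmetric. -/
/-!
In the coordinates `e = b.equivFun` the bracket reads `e [x, y] = A (e x × e y)`. The Jacobi identity
on the basis gives `A w = 0`, where `w = skewVec A` is the axial vector of `A - Aᵀ`; so if `A` is not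
symmetric then `det A = 0`, `ℤ_p` being a domain. Since `(N u) × (N v) = adj(N)ᵀ (u × v)`, iterating
gives `δ₁ ⊆ e⁻¹(im A)`, `δ₂ ⊆ e⁻¹(im (A adj(A)ᵀ))` and `δ₃ ⊆ e⁻¹(im (A adj(A adj(A)ᵀ)ᵀ))`; but
`adj(A adj(A)ᵀ) = adj(adj A)ᵀ adj A = det A • Aᵀ adj A = 0`, so `δ₃ = 0`.
-/

/-- The submodule generated by all brackets `f a b` with `a ∈ S`, `b ∈ T`. -/
noncomputable def bracketSub {p : ℕ} [Fact p.Prime] {L : Type*} [AddCommGroup L] [Module ℤ_[p] L]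
    (f : L →ₗ[ℤ_[p]] L →ₗ[ℤ_[p]] L) (S T : Submodule ℤ_[p] L) : Submodule ℤ_[p] L :=
  Submodule.span ℤ_[p] {z | ∃ a ∈ S, ∃ b ∈ T, z = f a b}

/-- The derived series `δ_0(L) = L`, `δ_{i+1}(L) = [δ_i(L), δ_i(L)]`. -/
noncomputable def derivedSer {p : ℕ} [Fact p.Prime] {L : Type*} [AddCommGroup L] [Module ℤ_[p] L]
    (f : L →ₗ[ℤ_[p]] L →ₗ[ℤ_[p]] L) : ℕ → Submodule ℤ_[p] L
  | 0 => ⊤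
  | n + 1 => bracketSub f (derivedSer f n) (derivedSer f n)

open Matrix

namespace Matrix

variable {R : Type*} [CommRing R]

theorem cross_mulVec_mulVec (A : Matrix (Fin 3) (Fin 3) R) (v w : Fin 3 → R) :
    (A *ᵥ v) ⨯₃ (A *ᵥ w) = (adjugate A)ᵀ *ᵥ (v ⨯₃ w) := by
  ext i
  fin_cases i <;>
    simp [cross_apply, mulVec, dotProduct, adjugate_fin_three, Fin.sum_univ_three] <;> ring

theorem adjugate_mul_adjugate_transpose_eq_zero {A : Matrix (Fin 3) (Fin 3) R} (hA : A.det = 0) :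
    adjugate (A * (adjugate A)ᵀ) = 0 := by
  rw [adjugate_mul_distrib, adjugate_transpose, adjugate_adjugate', det_transpose, hA]
  simp

def skewVec (A : Matrix (Fin 3) (Fin 3) R) : Fin 3 → R :=
  ![A 1 2 - A 2 1, A 2 0 - A 0 2, A 0 1 - A 1 0]

theorem transpose_eq_self_of_skewVec_eq_zero {A : Matrix (Fin 3) (Fin 3) R}
    (h : skewVec A = 0) : Aᵀ = A := by
  have h0 := congrFun h 0
  have h1 := congrFun h 1
  have h2 := congrFun h 2
  simp only [skewVec, Pi.zero_apply, Fin.isValue, cons_val, sub_eq_zero] at h0 h1 h2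
  ext i j
  fin_cases i <;> fin_cases j <;> simp [h0, h1, h2]

end Matrix

section Coordinates

variable {R M : Type*} [CommRing R] [AddCommGroup M] [Module R M] {f : M →ₗ[R] M →ₗ[R] M}
  {A : Matrix (Fin 3) (Fin 3) R}

theorem Module.Basis.equivFun_apply_eq_mulVec_cross (b : Module.Basis (Fin 3) R M) (hf : f.IsAlt)
    (h12 : f (b 1) (b 2) = ∑ i, A i 0 • b i) (h20 : f (b 2) (b 0) = ∑ i, A i 1 • b i)
    (h01 : f (b 0) (b 1) = ∑ i, A i 2 • b i) (x y : M) :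
    b.equivFun (f x y) = A *ᵥ (b.equivFun x ⨯₃ b.equivFun y) := by
  suffices f.compr₂ b.equivFun.toLinearMap = (crossProduct.compr₂ A.mulVecLin).compl₁₂
      b.equivFun.toLinearMap b.equivFun.toLinearMap from LinearMap.congr_fun₂ this x y
  have h21 : f (b 2) (b 1) = -f (b 1) (b 2) := (hf.neg _ _).symm
  have h02 : f (b 0) (b 2) = -f (b 2) (b 0) := (hf.neg _ _).symm
  have h10 : f (b 1) (b 0) = -f (b 0) (b 1) := (hf.neg _ _).symm
  refine LinearMap.ext_basis b b fun i j => ?_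
  fin_cases i <;> fin_cases j <;> simp [hf _, h12, h20, h01, h21, h02, h10] <;>
    ext k <;> fin_cases k <;> simp [cross_apply, mulVec, dotProduct, Fin.sum_univ_three]

theorem mulVec_skewVec_eq_zero_of_jacobi (b : Module.Basis (Fin 3) R M)
    (hjacobi : ∀ x y z : M, f (f x y) z + f (f z x) y + f (f y z) x = 0)
    (hcoord : ∀ x y, b.equivFun (f x y) = A *ᵥ (b.equivFun x ⨯₃ b.equivFun y)) :
    A *ᵥ skewVec A = 0 := by
  have h := congrArg b.equivFun (hjacobi (b 0) (b 1) (b 2))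
  simp only [map_add, hcoord, map_zero] at h
  rw [← h]
  ext k
  fin_cases k <;> simp [skewVec, cross_apply, mulVec, dotProduct, Fin.sum_univ_three] <;> ring

end Coordinates

section DerivedSeries

variable {p : ℕ} [Fact p.Prime] {L : Type*} [AddCommGroup L] [Module ℤ_[p] L]
  {f : L →ₗ[ℤ_[p]] L →ₗ[ℤ_[p]] L} {e : L →ₗ[ℤ_[p]] Fin 3 → ℤ_[p]} {A : Matrix (Fin 3) (Fin 3) ℤ_[p]}

theorem derivedSer_succ_le_comap_range (hcoord : ∀ x y, e (f x y) = A *ᵥ (e x ⨯₃ e y)) {n : ℕ}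
    {N : Matrix (Fin 3) (Fin 3) ℤ_[p]} (h : derivedSer f n ≤ (LinearMap.range N.mulVecLin).comap e) :
    derivedSer f (n + 1) ≤ (LinearMap.range (A * (adjugate N)ᵀ).mulVecLin).comap e := by
  refine Submodule.span_le.mpr ?_
  rintro _ ⟨x, hx, y, hy, rfl⟩
  obtain ⟨u, hu⟩ := h hx
  obtain ⟨v, hv⟩ := h hy
  refine ⟨u ⨯₃ v, ?_⟩
  simp only [mulVecLin_apply] at hu hv ⊢
  rw [hcoord, ← hu, ← hv, cross_mulVec_mulVec, mulVec_mulVec]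

theorem derivedSer_three_eq_bot (he : Function.Injective e)
    (hcoord : ∀ x y, e (f x y) = A *ᵥ (e x ⨯₃ e y)) (hA : A.det = 0) : derivedSer f 3 = ⊥ := by
  have h1 : derivedSer f 1 ≤ (LinearMap.range A.mulVecLin).comap e := by
    simpa using derivedSer_succ_le_comap_range hcoord (n := 0) (N := 1) (by simp [derivedSer])
  have h3 := derivedSer_succ_le_comap_range hcoord (derivedSer_succ_le_comap_range hcoord h1)
  rwa [adjugate_mul_adjugate_transpose_eq_zero hA, transpose_zero, mul_zero, mulVecLin_zero,
    LinearMap.range_zero, Submodule.comap_bot, LinearMap.ker_eq_bot.mpr he, le_bot_iff] at h3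

end DerivedSeries

theorem stmt7 (p : ℕ) [Fact p.Prime] {L : Type*} [AddCommGroup L] [Module ℤ_[p] L]
    (f : L →ₗ[ℤ_[p]] L →ₗ[ℤ_[p]] L) (hanti : ∀ z : L, f z z = 0)
    (hjacobi : ∀ x y z : L, f (f x y) z + f (f z x) y + f (f y z) x = 0)
    (hunsolv : ∀ i, derivedSer f i ≠ ⊥) :
    ∀ (b : Module.Basis (Fin 3) ℤ_[p] L) (A : Matrix (Fin 3) (Fin 3) ℤ_[p]),
      (f (b 1) (b 2) = ∑ i : Fin 3, A i 0 • b i ∧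
       f (b 2) (b 0) = ∑ i : Fin 3, A i 1 • b i ∧
       f (b 0) (b 1) = ∑ i : Fin 3, A i 2 • b i) →
      A.transpose = A := by
  rintro b A ⟨h12, h20, h01⟩
  have hcoord := b.equivFun_apply_eq_mulVec_cross hanti h12 h20 h01
  refine transpose_eq_self_of_skewVec_eq_zero (by_contra fun hskew => hunsolv 3 ?_)
  have hdet : A.det = 0 :=
    exists_mulVec_eq_zero_iff.mp ⟨_, hskew, mulVec_skewVec_eq_zero_of_jacobi b hjacobi hcoord⟩
  exact derivedSer_three_eq_bot b.equivFun.injective hcoord hdet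
end

section
/- Let L be a 3-dimensional unsolvable ℤ_p-Lie lattice admitting a diagonalizing basis, i.e., a basis (x_0,x_1,x_2) with [x_1,x_2] = a_0 x_0, [x_2,x_0] = a_1 x_1, [x_0,x_1] = a_2 x_2 where a_0, a_1, a_2 ∈ ℤ_p are all nonzero. Then L is just infinite: every nonzero ideal of L has rank 3. -/
/-!
If `y = c₀ x₀ + c₁ x₁ + c₂ x₂` lies in an ideal `I`, then `a₁ a₂ y + [x₀, [x₀, y]] = a₁ a₂ c₀ x₀`,
and cyclically; so a nonzero ideal contains a nonzero multiple of some `xᵢ`. Bracketing it with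
the other two basis vectors gives nonzero multiples of all three, and these are linearly
independent over the domain `ℤ_p`.
-/

open Module

namespace LinearMap.IsAlt

variable {R L : Type*} [CommRing R] [AddCommGroup L] [Module R L]
  {f : L →ₗ[R] L →ₗ[R] L} {x₀ x₁ x₂ : L} {a₁ a₂ : R}

/-- `ad x₀` kills `x₀`, and its square acts as `-a₁ a₂` on `x₁` and `x₂`. -/
theorem smul_add_apply_apply_eq_smul (hf : f.IsAlt) (h20 : f x₂ x₀ = a₁ • x₁)
    (h01 : f x₀ x₁ = a₂ • x₂) (c₀ c₁ c₂ : R) :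
    (a₁ * a₂) • (c₀ • x₀ + c₁ • x₁ + c₂ • x₂) + f x₀ (f x₀ (c₀ • x₀ + c₁ • x₁ + c₂ • x₂)) =
      (a₁ * a₂ * c₀) • x₀ := by
  have h02 : f x₀ x₂ = -(a₁ • x₁) := by rw [← hf.neg, h20]
  simp only [map_add, map_smul, hf.self_eq_zero, h01, h02, map_zero, smul_zero, smul_neg, map_neg]
  module

variable {I : Submodule R L} (hI : ∀ x, ∀ y ∈ I, f x y ∈ I)
include hI

theorem apply_mem_of_mem_left (hf : f.IsAlt) {y : L} (hy : y ∈ I) (x : L) : f y x ∈ I := by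
  rw [← hf.neg]
  exact I.neg_mem (hI x y hy)

theorem exists_smul_mem_of_coeff_ne_zero [IsDomain R] (hf : f.IsAlt)
    (h20 : f x₂ x₀ = a₁ • x₁) (h01 : f x₀ x₁ = a₂ • x₂) (ha₁ : a₁ ≠ 0) (ha₂ : a₂ ≠ 0)
    {c₀ c₁ c₂ : R} (hc₀ : c₀ ≠ 0) (hy : c₀ • x₀ + c₁ • x₁ + c₂ • x₂ ∈ I) :
    ∃ s₀ s₁ s₂ : R, s₀ ≠ 0 ∧ s₁ ≠ 0 ∧ s₂ ≠ 0 ∧ s₀ • x₀ ∈ I ∧ s₁ • x₁ ∈ I ∧ s₂ • x₂ ∈ I := by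
  set s := a₁ * a₂ * c₀
  have hs : s ≠ 0 := mul_ne_zero (mul_ne_zero ha₁ ha₂) hc₀
  have h₀ : s • x₀ ∈ I := by
    rw [← hf.smul_add_apply_apply_eq_smul h20 h01]
    exact I.add_mem (I.smul_mem _ hy) (hI _ _ (hI _ _ hy))
  have h₁ : f x₂ (s • x₀) = (s * a₁) • x₁ := by rw [map_smul, h20, smul_smul]
  have h₂ : f (s • x₀) x₁ = (s * a₂) • x₂ := by
    rw [map_smul, LinearMap.smul_apply, h01, smul_smul]
  refine ⟨s, s * a₁, s * a₂, hs, mul_ne_zero hs ha₁, mul_ne_zero hs ha₂, h₀, ?_, ?_⟩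
  · exact h₁ ▸ hI _ _ h₀
  · exact h₂ ▸ hf.apply_mem_of_mem_left hI h₀ _

theorem exists_smul_basis_mem [IsDomain R] (hf : f.IsAlt) (b : Basis (Fin 3) R L)
    {a₀ a₁ a₂ : R} (ha₀ : a₀ ≠ 0) (ha₁ : a₁ ≠ 0) (ha₂ : a₂ ≠ 0)
    (h12 : f (b 1) (b 2) = a₀ • b 0) (h20 : f (b 2) (b 0) = a₁ • b 1)
    (h01 : f (b 0) (b 1) = a₂ • b 2) {y : L} (hyI : y ∈ I) (hy : y ≠ 0) :
    ∃ s : Fin 3 → R, (∀ i, s i ≠ 0) ∧ ∀ i, s i • b i ∈ I := by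
  set c := b.repr y
  have hy_eq : c 0 • b 0 + c 1 • b 1 + c 2 • b 2 = y :=
    (Fin.sum_univ_three _).symm.trans (b.sum_repr y)
  have hc : c 0 ≠ 0 ∨ c 1 ≠ 0 ∨ c 2 ≠ 0 := by
    by_contra! h
    exact hy (by rw [← hy_eq, h.1, h.2.1, h.2.2]; simp)
  rw [← hy_eq] at hyI
  obtain ⟨s₀, s₁, s₂, h₀, h₁, h₂, m₀, m₁, m₂⟩ :
      ∃ s₀ s₁ s₂ : R, s₀ ≠ 0 ∧ s₁ ≠ 0 ∧ s₂ ≠ 0 ∧ s₀ • b 0 ∈ I ∧ s₁ • b 1 ∈ I ∧ s₂ • b 2 ∈ I := by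
    obtain hi | hi | hi := hc
    · exact hf.exists_smul_mem_of_coeff_ne_zero hI h20 h01 ha₁ ha₂ hi hyI
    · obtain ⟨s₁, s₂, s₀, h₁, h₂, h₀, m₁, m₂, m₀⟩ :=
        hf.exists_smul_mem_of_coeff_ne_zero hI h01 h12 ha₂ ha₀ hi (c₁ := c 2) (c₂ := c 0)
          (by convert hyI using 1; abel)
      exact ⟨s₀, s₁, s₂, h₀, h₁, h₂, m₀, m₁, m₂⟩
    · obtain ⟨s₂, s₀, s₁, h₂, h₀, h₁, m₂, m₀, m₁⟩ :=
        hf.exists_smul_mem_of_coeff_ne_zero hI h12 h20 ha₀ ha₁ hi (c₁ := c 0) (c₂ := c 1)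
          (by convert hyI using 1; abel)
      exact ⟨s₀, s₁, s₂, h₀, h₁, h₂, m₀, m₁, m₂⟩
  exact ⟨![s₀, s₁, s₂], by simp [Fin.forall_fin_succ, *], by simp [Fin.forall_fin_succ, *]⟩

end LinearMap.IsAlt

theorem Module.Basis.linearIndependent_smul_of_ne_zero {ι R M : Type*} [CommRing R] [IsDomain R]
    [AddCommGroup M] [Module R M] (b : Basis ι R M) {s : ι → R} (hs : ∀ i, s i ≠ 0) :
    LinearIndependent R (fun i => s i • b i) := by
  rw [linearIndependent_iff']
  intro t g hg i hi
  simp only [smul_smul] at hg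
  have := linearIndependent_iff'.mp b.linearIndependent t (fun i => g i * s i) hg i hi
  exact (mul_eq_zero.mp this).resolve_right (hs i)

theorem Submodule.finrank_eq_card_of_smul_basis_mem {ι R M : Type*} [Fintype ι] [CommRing R]
    [IsDomain R] [IsNoetherianRing R] [AddCommGroup M] [Module R M] (b : Basis ι R M)
    (I : Submodule R M) {s : ι → R} (hs : ∀ i, s i ≠ 0) (hI : ∀ i, s i • b i ∈ I) :
    finrank R I = Fintype.card ι := by
  have : Module.Finite R M := Module.Finite.of_basis b
  refine le_antisymm ((finrank_eq_card_basis b) ▸ I.finrank_le) ?_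
  have hli : LinearIndependent R (fun i => (⟨s i • b i, hI i⟩ : I)) :=
    LinearIndependent.of_comp I.subtype (b.linearIndependent_smul_of_ne_zero hs)
  exact hli.fintype_card_le_finrank

theorem stmt12_general (p : ℕ) [Fact p.Prime] {L : Type*} [AddCommGroup L] [Module ℤ_[p] L]
    (f : L →ₗ[ℤ_[p]] L →ₗ[ℤ_[p]] L) (hanti : ∀ z : L, f z z = 0)
    (b : Module.Basis (Fin 3) ℤ_[p] L) (a₀ a₁ a₂ : ℤ_[p])
    (h0 : a₀ ≠ 0) (h1 : a₁ ≠ 0) (h2 : a₂ ≠ 0)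
    (hbr : f (b 1) (b 2) = a₀ • b 0 ∧ f (b 2) (b 0) = a₁ • b 1 ∧
           f (b 0) (b 1) = a₂ • b 2) :
    ∀ I : Submodule ℤ_[p] L, (∀ x : L, ∀ y ∈ I, f x y ∈ I) → I ≠ ⊥ →
      Module.finrank ℤ_[p] I = 3 := by
  intro I hI hI_ne
  obtain ⟨y, hyI, hy⟩ := I.ne_bot_iff.mp hI_ne
  have hf : f.IsAlt := hanti
  obtain ⟨s, hs, hsI⟩ := hf.exists_smul_basis_mem hI b h0 h1 h2 hbr.1 hbr.2.1 hbr.2.2 hyI hy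
  simpa using I.finrank_eq_card_of_smul_basis_mem b hs hsI

theorem stmt12 (p : ℕ) [Fact p.Prime] {L : Type*} [AddCommGroup L] [Module ℤ_[p] L]
    (f : L →ₗ[ℤ_[p]] L →ₗ[ℤ_[p]] L) (hanti : ∀ z : L, f z z = 0)
    (hjacobi : ∀ x y z : L, f (f x y) z + f (f z x) y + f (f y z) x = 0)
    (b : Module.Basis (Fin 3) ℤ_[p] L) (a₀ a₁ a₂ : ℤ_[p])
    (h0 : a₀ ≠ 0) (h1 : a₁ ≠ 0) (h2 : a₂ ≠ 0)
    (hbr : f (b 1) (b 2) = a₀ • b 0 ∧ f (b 2) (b 0) = a₁ • b 1 ∧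
           f (b 0) (b 1) = a₂ • b 2) :
    ∀ I : Submodule ℤ_[p] L, (∀ x : L, ∀ y ∈ I, f x y ∈ I) → I ≠ ⊥ →
      Module.finrank ℤ_[p] I = 3 :=
  stmt12_general p f hanti b a₀ a₁ a₂ h0 h1 h2 hbr
end

section
/- Let L be an n-dimensional hereditarily just-infinite antisymmetric ℤ_p-algebra with n ≥ 1. If φ: M → L is a simple virtual endomorphism (M an n-dimensional subalgebra, φ an algebra morphism with no nonzero φ-invariant ideal of L), then φ is injective. -/
open Module

lemma tors13 (p : ℕ) [Fact p.Prime] {L : Type*} [AddCommGroup L] [Module ℤ_[p] L]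
    [Module.Free ℤ_[p] L] [Module.Finite ℤ_[p] L] (n : ℕ)
    (hL : Module.finrank ℤ_[p] L = n)
    (K : Submodule ℤ_[p] L) (hK : Module.finrank ℤ_[p] K = n) (y : L) :
    ∃ c : ℤ_[p], c ≠ 0 ∧ c • y ∈ K := by
  by_contra h
  push_neg at h
  have h' : ∀ c : ℤ_[p], c • y ∈ K → c = 0 := fun c hc => by
    by_contra hc0; exact h c hc0 hc
  let b : Basis (Fin n) ℤ_[p] K := (Module.finBasis ℤ_[p] K).reindex (finCongr hK)
  let v : Fin (n+1) → L := Fin.cons y (fun i => (b i : L))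
  have hli : LinearIndependent ℤ_[p] v := by
    rw [Fintype.linearIndependent_iff]
    intro g hg
    rw [Fin.sum_univ_succ] at hg
    simp only [v, Fin.cons_zero, Fin.cons_succ] at hg
    set s : K := ∑ i : Fin n, g i.succ • b i with hs
    have hsc : (s : L) = ∑ i : Fin n, g i.succ • (b i : L) := by
      simp [hs]
    have hg0 : g 0 = 0 := by
      apply h'
      have : g 0 • y = -(s : L) := by
        rw [hsc]; exact eq_neg_of_add_eq_zero_left hg
      rw [this]; exact K.neg_mem s.2
    have hrest : ∀ i : Fin n, g i.succ = 0 := by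
      have hz : s = 0 := by
        have hzc : (s : L) = 0 := by
          rw [hsc]
          simp only [hg0, zero_smul, zero_add] at hg
          exact hg
        exact ZeroMemClass.coe_eq_zero.mp hzc
      have := Fintype.linearIndependent_iff.mp b.linearIndependent (fun i => g i.succ) (by rw [← hs, hz])
      exact this
    intro i
    refine Fin.cases hg0 hrest i
  have hcard := hli.fintype_card_le_finrank
  rw [hL, Fintype.card_fin] at hcard
  omega
theorem stmt13 (p : ℕ) [Fact p.Prime] (n : ℕ) (hn : 1 ≤ n) {L : Type*}
    [AddCommGroup L] [Module ℤ_[p] L] [Module.Free ℤ_[p] L] [Module.Finite ℤ_[p] L]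
    (hL : Module.finrank ℤ_[p] L = n)
    (f : L →ₗ[ℤ_[p]] L →ₗ[ℤ_[p]] L) (hanti : ∀ z : L, f z z = 0)
    -- `L` is hereditarily just infinite:
    (hhji : ∀ M : Submodule ℤ_[p] L, Module.finrank ℤ_[p] M = n →
      (∀ a ∈ M, ∀ c ∈ M, f a c ∈ M) →
      ∀ I : Submodule ℤ_[p] L, I ≤ M → (∀ x ∈ M, ∀ y ∈ I, f x y ∈ I) → I ≠ ⊥ →
        Module.finrank ℤ_[p] I = n)
    -- a virtual endomorphism `φ : M → L`:
    (M : Submodule ℤ_[p] L) (hMn : Module.finrank ℤ_[p] M = n)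
    (hMsub : ∀ a ∈ M, ∀ c ∈ M, f a c ∈ M)
    (φ : M →ₗ[ℤ_[p]] L)
    (hφmor : ∀ u v : M, ∀ h : f u v ∈ M, φ ⟨f u v, h⟩ = f (φ u) (φ v))
    -- `φ` is simple:
    (hsimple : ∀ I : Submodule ℤ_[p] L, (∀ x : L, ∀ y ∈ I, f x y ∈ I) →
      ∀ hle : I ≤ M, (∀ y (hy : y ∈ I), φ ⟨y, hle hy⟩ ∈ I) → I = ⊥) :
    Function.Injective φ := by
  rw [← LinearMap.ker_eq_bot]
  by_contra hker
  set K' : Submodule ℤ_[p] L := (LinearMap.ker φ).map M.subtype with hK'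
  have hK'le : K' ≤ M := Submodule.map_subtype_le _ _
  have hK'ideal : ∀ x ∈ M, ∀ y ∈ K', f x y ∈ K' := by
    intro x hx y hy
    obtain ⟨z, hz, rfl⟩ := hy
    have hmem : f x (z : L) ∈ M := hMsub x hx (z : L) z.2
    refine ⟨⟨f x (z : L), hmem⟩, ?_, rfl⟩
    have h2 := hφmor ⟨x, hx⟩ z hmem
    simp only [SetLike.mem_coe, LinearMap.mem_ker] at hz ⊢
    rw [h2, hz, map_zero]
  have hK'ne : K' ≠ ⊥ := by
    intro h
    apply hker
    rw [eq_bot_iff]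
    intro z hz
    have hmem : (z : L) ∈ K' := ⟨z, hz, rfl⟩
    rw [h, Submodule.mem_bot] at hmem
    simpa [Submodule.mem_bot] using Subtype.ext hmem
  have hK'rank := hhji M hMn hMsub K' hK'le hK'ideal hK'ne
  have hφ0 : ∀ y : M, φ y = 0 := by
    intro y
    obtain ⟨c, hc0, hcy⟩ := tors13 p n hL K' hK'rank (y : L)
    obtain ⟨z, hz, hze⟩ := hcy
    have hzy : (c • y : M) = z := Subtype.ext (by rw [Submodule.coe_smul, ← hze]; rfl)
    have h1 : c • φ y = 0 := by
      rw [← map_smul, hzy]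
      exact LinearMap.mem_ker.mp hz
    rcases smul_eq_zero.mp h1 with h | h
    · exact absurd h hc0
    · exact h
  let e : Basis (Fin n) ℤ_[p] L := (Module.finBasis ℤ_[p] L).reindex (finCongr hL)
  choose c hc0 hcM using fun i : Fin n => tors13 p n hL M hMn (e i)
  set C := ∏ i : Fin n, c i with hCdef
  have hC0 : C ≠ 0 := Finset.prod_ne_zero_iff.mpr fun i _ => hc0 i
  have hCM : ∀ x : L, C • x ∈ M := by
    intro x
    have hx : ∑ i, e.repr x i • e i = x := Basis.sum_repr e x
    rw [← hx, Finset.smul_sum]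
    refine M.sum_mem fun i _ => ?_
    rw [smul_comm]
    refine M.smul_mem _ ?_
    have hCi : (∏ j ∈ Finset.univ.erase i, c j) * c i = C :=
      Finset.prod_erase_mul _ _ (Finset.mem_univ i)
    rw [← hCi, mul_smul]
    exact M.smul_mem _ (hcM i)
  set I : Submodule ℤ_[p] L := Submodule.map (C • (LinearMap.id : L →ₗ[ℤ_[p]] L)) ⊤ with hI
  have hmemI : ∀ x : L, C • x ∈ I := fun x => ⟨x, trivial, rfl⟩
  have hIle : I ≤ M := by
    rintro y ⟨x, -, rfl⟩
    exact hCM x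
  have hIideal : ∀ x : L, ∀ y ∈ I, f x y ∈ I := by
    rintro x y ⟨w, -, rfl⟩
    have : f x ((C • (LinearMap.id : L →ₗ[ℤ_[p]] L)) w) = C • f x w := by
      simp [map_smul]
    rw [this]
    exact hmemI _
  have hIinv : ∀ y (hy : y ∈ I), φ ⟨y, hIle hy⟩ ∈ I := by
    intro y hy
    rw [hφ0]
    exact I.zero_mem
  have hIbot := hsimple I hIideal hIle hIinv
  have hne : C • e ⟨0, hn⟩ ≠ 0 := fun h0 =>
    (e.ne_zero _) ((smul_eq_zero.mp h0).resolve_left hC0)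
  have : C • e ⟨0, hn⟩ ∈ I := hmemI _
  rw [hIbot, Submodule.mem_bot] at this
  exact hne this
end

section
/- Let L be an n-dimensional antisymmetric ℤ_p-algebra and M ⊆ L an n-dimensional subalgebra admitting a simple virtual endomorphism of index p^k. Then L admits a simple virtual endomorphism of index p^k·[L:M]. -/
theorem stmt14_general (p : ℕ) [Fact p.Prime] (k : ℕ) {L : Type*}
    [AddCommGroup L] [Module ℤ_[p] L]
    (f : L →ₗ[ℤ_[p]] L →ₗ[ℤ_[p]] L)
    -- `M` is an `n`-dimensional subalgebra of `L`:
    (M : Submodule ℤ_[p] L)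
    -- a simple virtual endomorphism `φ : N → M` of `M` of index `p ^ k`:
    (N : Submodule ℤ_[p] L) (hNM : N ≤ M)
    (hNsub : ∀ a ∈ N, ∀ c ∈ N, f a c ∈ N)
    (φ : N →ₗ[ℤ_[p]] L)
    (hmor : ∀ u v : N, ∀ h : f u v ∈ N, φ ⟨f u v, h⟩ = f (φ u) (φ v))
    (hidx : N.toAddSubgroup.relIndex M.toAddSubgroup = p ^ k)
    (hsimple : ∀ I : Submodule ℤ_[p] L, I ≤ M → (∀ x ∈ M, ∀ y ∈ I, f x y ∈ I) →
      ∀ hle : I ≤ N, (∀ y (hy : y ∈ I), φ ⟨y, hle hy⟩ ∈ I) → I = ⊥) :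
    -- then `L` admits a simple virtual endomorphism of index `p ^ k * [L : M]`:
    ∃ (N' : Submodule ℤ_[p] L) (_ : ∀ a ∈ N', ∀ c ∈ N', f a c ∈ N')
      (φ' : N' →ₗ[ℤ_[p]] L),
      N'.toAddSubgroup.index = p ^ k * M.toAddSubgroup.index ∧
      (∀ u v : N', ∀ h : f u v ∈ N', φ' ⟨f u v, h⟩ = f (φ' u) (φ' v)) ∧
      ∀ I : Submodule ℤ_[p] L, (∀ x : L, ∀ y ∈ I, f x y ∈ I) →
        ∀ hle : I ≤ N', (∀ y (hy : y ∈ I), φ' ⟨y, hle hy⟩ ∈ I) → I = ⊥ := by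
  -- `φ` itself works: indices multiply along `N ≤ M ≤ L`, and an ideal of `L` inside `N` is
  -- in particular an ideal of `M`.
  refine ⟨N, hNsub, φ, ?_, hmor, fun I hI hle hinv ↦ ?_⟩
  · rw [← hidx, AddSubgroup.relIndex_mul_index hNM]
  · exact hsimple I (hle.trans hNM) (fun x _ y hy ↦ hI x y hy) hle hinv

theorem stmt14 (p : ℕ) [Fact p.Prime] (n k : ℕ) {L : Type*}
    [AddCommGroup L] [Module ℤ_[p] L] [Module.Free ℤ_[p] L] [Module.Finite ℤ_[p] L]
    (hL : Module.finrank ℤ_[p] L = n)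
    (f : L →ₗ[ℤ_[p]] L →ₗ[ℤ_[p]] L) (hanti : ∀ z : L, f z z = 0)
    -- `M` is an `n`-dimensional subalgebra of `L`:
    (M : Submodule ℤ_[p] L) (hMn : Module.finrank ℤ_[p] M = n)
    (hMsub : ∀ a ∈ M, ∀ c ∈ M, f a c ∈ M)
    -- a simple virtual endomorphism `φ : N → M` of `M` of index `p ^ k`:
    (N : Submodule ℤ_[p] L) (hNM : N ≤ M) (hNn : Module.finrank ℤ_[p] N = n)
    (hNsub : ∀ a ∈ N, ∀ c ∈ N, f a c ∈ N)
    (φ : N →ₗ[ℤ_[p]] L) (hrange : ∀ u : N, φ u ∈ M)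
    (hmor : ∀ u v : N, ∀ h : f u v ∈ N, φ ⟨f u v, h⟩ = f (φ u) (φ v))
    (hidx : N.toAddSubgroup.relIndex M.toAddSubgroup = p ^ k)
    (hsimple : ∀ I : Submodule ℤ_[p] L, I ≤ M → (∀ x ∈ M, ∀ y ∈ I, f x y ∈ I) →
      ∀ hle : I ≤ N, (∀ y (hy : y ∈ I), φ ⟨y, hle hy⟩ ∈ I) → I = ⊥) :
    -- then `L` admits a simple virtual endomorphism of index `p ^ k * [L : M]`:
    ∃ (N' : Submodule ℤ_[p] L) (_ : ∀ a ∈ N', ∀ c ∈ N', f a c ∈ N')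
      (φ' : N' →ₗ[ℤ_[p]] L),
      N'.toAddSubgroup.index = p ^ k * M.toAddSubgroup.index ∧
      (∀ u v : N', ∀ h : f u v ∈ N', φ' ⟨f u v, h⟩ = f (φ' u) (φ' v)) ∧
      ∀ I : Submodule ℤ_[p] L, (∀ x : L, ∀ y ∈ I, f x y ∈ I) →
        ∀ hle : I ≤ N', (∀ y (hy : y ∈ I), φ' ⟨y, hle hy⟩ ∈ I) → I = ⊥ :=
  stmt14_general p k f M N hNM hNsub φ hmor hidx hsimple
end

section
/- Let p be a prime and G a group in which every finite-index subgroup has index a power of p. Let φ: D → G be a virtual endomorphism with [G:D] = p, and let (D_n) be the sequence of domains of the powers of φ (D_0 = G, D_{n+1} = {x ∈ D : φ(x) ∈ D_n}). If φ(D_{n+1}) ⊄ D_{n+1} for all n ≥ 0, then [D_n : D_{n+1}] = p for all n ≥ 0. -/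
/-!
Each domain is the preimage of the previous one, `D_{n+1} = φ⁻¹(D_n)`, so the index of
`D_{n+2}` in `D_{n+1}` equals the index of `φ⁻¹(D_{n+1})` in `φ⁻¹(D_n)`, which is at most
`[D_n : D_{n+1}] = p`. It is not `1`, since `D_{n+1} ≤ D_{n+2}` would give
`φ(D_{n+2}) ≤ D_{n+1} ≤ D_{n+2}`; and it divides the index of `D_{n+2}` in `G`, which is finite
by induction and hence a power of `p`. So it is `p`.
-/

namespace Subgroup

variable {G G' : Type*} [Group G] [Group G']

theorem relIndex_comap_le (f : G →* G') {J K : Subgroup G'} (hJK : J.relIndex K ≠ 0) :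
    (J.comap f).relIndex (K.comap f) ≤ J.relIndex K := by
  rw [relIndex_comap]
  exact relIndex_le_of_le_right (map_comap_le _ _) hJK

theorem relIndex_eq_prime_of_le {p : ℕ} (hp : p.Prime)
    (hG : ∀ H : Subgroup G, H.index ≠ 0 → ∃ m : ℕ, H.index = p ^ m) {H K : Subgroup G}
    (hHK : H ≤ K) (hH : H.index ≠ 0) (hle : H.relIndex K ≤ p) (hKH : ¬ K ≤ H) :
    H.relIndex K = p := by
  obtain ⟨m, hm⟩ := hG H hH
  have hdvd : H.relIndex K ∣ p ^ m := hm ▸ relIndex_dvd_index_of_le hHK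
  obtain ⟨c, -, hc⟩ := (Nat.dvd_prime_pow hp).mp hdvd
  have hc0 : c ≠ 0 := by
    rintro rfl
    exact hKH (relIndex_eq_one.mp (by simpa using hc))
  refine le_antisymm hle ?_
  calc p = p ^ 1 := (pow_one p).symm
    _ ≤ p ^ c := Nat.pow_le_pow_right hp.pos (Nat.one_le_iff_ne_zero.mpr hc0)
    _ = H.relIndex K := hc.symm

end Subgroup

namespace VirtualEndomorphism

open Subgroup

variable {G : Type*} [Group G] {D : Subgroup G} (φ : D →* G)

def preimage (H : Subgroup G) : Subgroup G :=
  (H.comap φ).map D.subtype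

theorem preimage_mono {H K : Subgroup G} (h : H ≤ K) : preimage φ H ≤ preimage φ K :=
  map_mono (comap_mono h)

theorem preimage_top : preimage φ ⊤ = D := by
  rw [preimage, comap_top, ← MonoidHom.range_eq_map, range_subtype]

theorem subgroupOf_preimage (H : Subgroup G) : (preimage φ H).subgroupOf D = H.comap φ :=
  comap_map_eq_self_of_injective D.subtype_injective _

theorem map_subgroupOf_preimage_le (H : Subgroup G) :
    ((preimage φ H).subgroupOf D).map φ ≤ H := by
  rw [subgroupOf_preimage]
  exact map_comap_le _ _

theorem relIndex_preimage (J K : Subgroup G) :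
    (preimage φ J).relIndex (preimage φ K) = (J.comap φ).relIndex (K.comap φ) :=
  relIndex_map_map_of_injective _ _ D.subtype_injective

theorem antitone_of_eq_preimage {Dn : ℕ → Subgroup G} (h0 : Dn 0 = ⊤)
    (hsucc : ∀ n, Dn (n + 1) = preimage φ (Dn n)) : Antitone Dn := by
  refine antitone_nat_of_succ_le fun n => ?_
  induction n with
  | zero => exact h0 ▸ le_top
  | succ n ih =>
    rw [hsucc (n + 1)]
    rw [hsucc n] at ih ⊢
    exact preimage_mono φ ih

theorem relIndex_preimage_preimage_eq_prime {p : ℕ} (hp : p.Prime)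
    (hG : ∀ H : Subgroup G, H.index ≠ 0 → ∃ m : ℕ, H.index = p ^ m) {H : Subgroup G}
    (hle : preimage φ H ≤ H) (hrel : (preimage φ H).relIndex H = p)
    (hindex : (preimage φ H).index ≠ 0) (hnot : ¬ preimage φ H ≤ preimage φ (preimage φ H)) :
    (preimage φ (preimage φ H)).relIndex (preimage φ H) = p ∧
      (preimage φ (preimage φ H)).index ≠ 0 := by
  have hrel0 : (preimage φ H).relIndex H ≠ 0 := hrel ▸ hp.ne_zero
  have hr : (preimage φ (preimage φ H)).relIndex (preimage φ H)
      = ((preimage φ H).comap φ).relIndex (H.comap φ) := relIndex_preimage φ _ _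
  have hr0 : (preimage φ (preimage φ H)).relIndex (preimage φ H) ≠ 0 :=
    hr ▸ relIndex_comap_ne_zero φ hrel0
  have hindex' : (preimage φ (preimage φ H)).index ≠ 0 := by
    rw [← relIndex_mul_index (preimage_mono φ hle)]
    exact mul_ne_zero hr0 hindex
  refine ⟨relIndex_eq_prime_of_le hp hG (preimage_mono φ hle) hindex' ?_ hnot, hindex'⟩
  exact hr ▸ hrel ▸ relIndex_comap_le φ hrel0

end VirtualEndomorphism

open VirtualEndomorphism in
theorem stmt17 (p : ℕ) (hp : p.Prime) {G : Type*} [Group G]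
    (hG : ∀ H : Subgroup G, H.index ≠ 0 → ∃ m : ℕ, H.index = p ^ m)
    (D : Subgroup G) (hD : D.index = p) (φ : D →* G)
    (Dn : ℕ → Subgroup G) (hDn0 : Dn 0 = ⊤)
    (hDnsucc : ∀ n, Dn (n + 1) = Subgroup.map D.subtype (Subgroup.comap φ (Dn n)))
    (hnotinv : ∀ n, ¬ Subgroup.map φ ((Dn (n + 1)).subgroupOf D) ≤ Dn (n + 1)) :
    ∀ n, (Dn (n + 1)).relIndex (Dn n) = p := by
  have hsucc (n : ℕ) : Dn (n + 1) = preimage φ (Dn n) := hDnsucc n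
  have hstrict (n : ℕ) : ¬ Dn n ≤ Dn (n + 1) := by
    intro h
    refine hnotinv n (le_trans ?_ h)
    rw [hsucc n]
    exact map_subgroupOf_preimage_le φ (Dn n)
  suffices ∀ n, (Dn (n + 1)).relIndex (Dn n) = p ∧ (Dn (n + 1)).index ≠ 0 from
    fun n => (this n).1
  intro n
  induction n with
  | zero =>
    rw [hsucc, hDn0, preimage_top, Subgroup.relIndex_top_right, hD]
    exact ⟨rfl, hp.ne_zero⟩
  | succ n ih =>
    have hle := antitone_of_eq_preimage φ hDn0 hsucc n.le_succ
    have hnot := hstrict (n + 1)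
    rw [hsucc (n + 1), hsucc n] at hnot ⊢
    rw [hsucc n] at ih hle
    exact relIndex_preimage_preimage_eq_prime φ hp hG hle ih.1 ih.2 hnot
end

section
/- Let p ≥ 3 be a prime, let L be a 3-dimensional ℤ_p-Lie lattice with a diagonalizing basis (x_0,x_1,x_2), i.e., [x_1,x_2] = a_0 x_0, [x_2,x_0] = a_1 x_1, [x_0,x_1] = a_2 x_2 with a_i = u_i p^{s_i}, u_i ∈ ℤ_p^×, s_0 ≤ s_1 ≤ s_2. If s_0 = s_1 < s_2 and −u_0 u_1 is not a square modulo p, then for every e ∈ {1,…,p−1} and f ∈ {0,…,p−1} one has v_p(e² a_0 + f² a_1 + a_2) = v_p(a_0), and for every e ∈ {1,…,p−1} one has v_p(e² a_0 + a_1) = v_p(a_0). -/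
/-! A nonsquare `-u₀u₁` makes the binary form `e²u₀ + g²u₁` anisotropic over `𝔽_p`, so for `e ≢ 0`
the sum `e²a₀ + g²a₁ + a₂ = p^{s₀}(e²u₀ + g²u₁ + p^{s₂-s₀}u₂)` is `p^{s₀}` times a `p`-adic unit. -/

open PadicInt

theorem sq_mul_add_sq_mul_ne_zero {K : Type*} [Field K] {a b : K} (hab : ¬IsSquare (-(a * b)))
    {e : K} (he : e ≠ 0) (g : K) : e ^ 2 * a + g ^ 2 * b ≠ 0 := by
  intro h
  refine hab ⟨g * b / e, ?_⟩
  field_simp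
  linear_combination (-b) * h

namespace PadicInt

variable {p : ℕ} [Fact p.Prime]

theorem valuation_eq_zero_of_isUnit {c : ℤ_[p]} (hc : IsUnit c) : c.valuation = 0 := by
  obtain ⟨d, hd⟩ := hc.exists_right_inv
  have := valuation_mul hc.ne_zero (right_ne_zero_of_mul_eq_one hd)
  rw [hd, valuation_one] at this
  omega

theorem isUnit_of_toZMod_ne_zero {c : ℤ_[p]} (hc : toZMod c ≠ 0) : IsUnit c := by
  by_contra h
  have hker : c ∈ RingHom.ker (toZMod : ℤ_[p] →+* ZMod p) :=
    (ker_toZMod (p := p)) ▸ (IsLocalRing.mem_maximalIdeal c).mpr h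
  exact hc hker

theorem valuation_coe_p_pow_mul_of_toZMod_ne_zero (s : ℕ) {c : ℤ_[p]} (hc : toZMod c ≠ 0) :
    Padic.valuation (((p : ℤ_[p]) ^ s * c : ℤ_[p]) : ℚ_[p]) = s := by
  have hunit := isUnit_of_toZMod_ne_zero hc
  rw [valuation_coe, valuation_p_pow_mul _ _ hunit.ne_zero, valuation_eq_zero_of_isUnit hunit,
    add_zero]

end PadicInt

theorem stmt18_general (p : ℕ) [Fact p.Prime]
    (a₀ a₁ a₂ : ℤ_[p]) (u₀ u₁ u₂ : ℤ_[p]ˣ)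
    (s₀ s₁ s₂ : ℕ)
    (ha₀ : a₀ = (u₀ : ℤ_[p]) * (p : ℤ_[p]) ^ s₀)
    (ha₁ : a₁ = (u₁ : ℤ_[p]) * (p : ℤ_[p]) ^ s₁)
    (ha₂ : a₂ = (u₂ : ℤ_[p]) * (p : ℤ_[p]) ^ s₂)
    (heq : s₀ = s₁) (hlt : s₁ < s₂)
    (hnonsq : ¬ ∃ t : ZMod p, t * t = PadicInt.toZMod (-((u₀ : ℤ_[p]) * (u₁ : ℤ_[p])))) :
    (∀ e : ℕ, 1 ≤ e → e ≤ p - 1 → ∀ g : ℕ, g ≤ p - 1 →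
      Padic.valuation (((e : ℤ_[p]) ^ 2 * a₀ + (g : ℤ_[p]) ^ 2 * a₁ + a₂ : ℤ_[p]) : ℚ_[p]) = Padic.valuation ((a₀ : ℤ_[p]) : ℚ_[p])) ∧
    (∀ e : ℕ, 1 ≤ e → e ≤ p - 1 →
      Padic.valuation (((e : ℤ_[p]) ^ 2 * a₀ + a₁ : ℤ_[p]) : ℚ_[p]) = Padic.valuation ((a₀ : ℤ_[p]) : ℚ_[p])) := by
  subst ha₀ ha₁ ha₂ heq
  have hsq : ¬IsSquare (-(toZMod (u₀ : ℤ_[p]) * toZMod (u₁ : ℤ_[p]))) := by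
    rintro ⟨t, ht⟩
    exact hnonsq ⟨t, by simpa using ht.symm⟩
  have hform : ∀ e : ℕ, 1 ≤ e → e ≤ p - 1 → ∀ g : ℕ,
      toZMod ((e : ℤ_[p]) ^ 2 * (u₀ : ℤ_[p]) + (g : ℤ_[p]) ^ 2 * (u₁ : ℤ_[p])) ≠ 0 := by
    intro e he1 he2 g
    have he : (e : ZMod p) ≠ 0 := by
      rw [Ne, ZMod.natCast_eq_zero_iff]
      exact Nat.not_dvd_of_pos_of_lt he1 (by omega)
    simpa using sq_mul_add_sq_mul_ne_zero hsq he g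
  have hval₀ : Padic.valuation (((u₀ : ℤ_[p]) * (p : ℤ_[p]) ^ s₀ : ℤ_[p]) : ℚ_[p]) = s₀ := by
    rw [mul_comm]
    exact valuation_coe_p_pow_mul_of_toZMod_ne_zero s₀ (u₀.isUnit.map toZMod).ne_zero
  refine ⟨fun e he1 he2 g _ => ?_, fun e he1 he2 => ?_⟩
  · obtain ⟨k, rfl⟩ := Nat.exists_eq_add_of_lt hlt
    rw [hval₀, show (e : ℤ_[p]) ^ 2 * ((u₀ : ℤ_[p]) * p ^ s₀)
        + (g : ℤ_[p]) ^ 2 * ((u₁ : ℤ_[p]) * p ^ s₀) + (u₂ : ℤ_[p]) * p ^ (s₀ + k + 1)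
        = p ^ s₀ * ((e : ℤ_[p]) ^ 2 * u₀ + (g : ℤ_[p]) ^ 2 * u₁ + p * (p ^ k * u₂)) by ring]
    exact valuation_coe_p_pow_mul_of_toZMod_ne_zero s₀ (by simpa using hform e he1 he2 g)
  · rw [hval₀, show (e : ℤ_[p]) ^ 2 * ((u₀ : ℤ_[p]) * p ^ s₀) + (u₁ : ℤ_[p]) * p ^ s₀
        = p ^ s₀ * ((e : ℤ_[p]) ^ 2 * u₀ + u₁) by ring]
    exact valuation_coe_p_pow_mul_of_toZMod_ne_zero s₀ (by simpa using hform e he1 he2 1)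

theorem stmt18 (p : ℕ) [Fact p.Prime] (hp3 : 3 ≤ p) {L : Type*} [AddCommGroup L]
    [Module ℤ_[p] L]
    (f : L →ₗ[ℤ_[p]] L →ₗ[ℤ_[p]] L) (hanti : ∀ z : L, f z z = 0)
    (hjacobi : ∀ x y z : L, f (f x y) z + f (f z x) y + f (f y z) x = 0)
    (x : Module.Basis (Fin 3) ℤ_[p] L) (a₀ a₁ a₂ : ℤ_[p]) (u₀ u₁ u₂ : ℤ_[p]ˣ)
    (s₀ s₁ s₂ : ℕ)
    (ha₀ : a₀ = (u₀ : ℤ_[p]) * (p : ℤ_[p]) ^ s₀)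
    (ha₁ : a₁ = (u₁ : ℤ_[p]) * (p : ℤ_[p]) ^ s₁)
    (ha₂ : a₂ = (u₂ : ℤ_[p]) * (p : ℤ_[p]) ^ s₂)
    (hs01 : s₀ ≤ s₁) (hs12 : s₁ ≤ s₂)
    (hdiag : f (x 1) (x 2) = a₀ • x 0 ∧ f (x 2) (x 0) = a₁ • x 1 ∧
             f (x 0) (x 1) = a₂ • x 2)
    (heq : s₀ = s₁) (hlt : s₁ < s₂)
    (hnonsq : ¬ ∃ t : ZMod p, t * t = PadicInt.toZMod (-((u₀ : ℤ_[p]) * (u₁ : ℤ_[p])))) :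
    (∀ e : ℕ, 1 ≤ e → e ≤ p - 1 → ∀ g : ℕ, g ≤ p - 1 →
      Padic.valuation (((e : ℤ_[p]) ^ 2 * a₀ + (g : ℤ_[p]) ^ 2 * a₁ + a₂ : ℤ_[p]) : ℚ_[p]) = Padic.valuation ((a₀ : ℤ_[p]) : ℚ_[p])) ∧
    (∀ e : ℕ, 1 ≤ e → e ≤ p - 1 →
      Padic.valuation (((e : ℤ_[p]) ^ 2 * a₀ + a₁ : ℤ_[p]) : ℚ_[p]) = Padic.valuation ((a₀ : ℤ_[p]) : ℚ_[p])) :=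
  stmt18_general p a₀ a₁ a₂ u₀ u₁ u₂ s₀ s₁ s₂ ha₀ ha₁ ha₂ heq hlt hnonsq
end

section
/- Let p ≥ 3 be a prime and L a 3-dimensional ℤ_p-Lie lattice with a basis (x_0,x_1,x_2) in which the bracket is [x_1,x_2] = p^{s_0} x_0, [x_2,x_0] = p^{s_0} x_1, [x_0,x_1] = p^{s_0} x_2 for some s_0 ∈ ℕ (i.e., p^{s_0}·sl_2-type canonical form with identity matrix scaled by p^{s_0}). Then L admits a simple virtual endomorphism of index p; that is, L is self-similar of index p. -/
/-!
Since `p` is odd, `-1 = α² + β²` in `ℤ_p` (lift a solution mod `p` by Hensel's lemma). Then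
`e = x₀ + αx₁ + βx₂`, `f = x₀ - αx₁ - βx₂`, `h = -βx₁ + αx₂` is again a basis of `L` (the
change of basis has determinant `2`), with `[f, h] = p^s₀ f`, `[h, e] = p^s₀ e`,
`[e, f] = -2p^s₀ h`: `L` is a scaled `sl₂(ℤ_p)`. On the sublattice `M` of elements whose
`e`-coordinate is divisible by `p`, conjugation by `diag(1, p)` is a Lie morphism `M → L` of index
`p`. An invariant ideal inside `M` has `e`-coordinates divisible by every power of `p`, hence zero,
and bracketing with `e` then kills its `h`- and `f`-coordinates.
-/

open Polynomial IsLocalRing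

namespace PadicInt

variable {p : ℕ} [Fact p.Prime]

lemma norm_lt_one_iff_toZMod_eq_zero (x : ℤ_[p]) : ‖x‖ < 1 ↔ toZMod x = 0 := by
  rw [← RingHom.mem_ker, ker_toZMod, mem_maximalIdeal, mem_nonunits]

lemma isUnit_two (hp : p ≠ 2) : IsUnit (2 : ℤ_[p]) := by
  rw [isUnit_iff, ← norm_natCast_eq_one_iff.2 ((Nat.coprime_primes Fact.out Nat.prime_two).2 hp),
    Nat.cast_ofNat]

lemma exists_sq_eq_of_toZMod_eq (hp : p ≠ 2) {a a₀ : ℤ_[p]} (ha₀ : toZMod a₀ ≠ 0)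
    (h : toZMod (a₀ ^ 2) = toZMod a) : ∃ z : ℤ_[p], z ^ 2 = a := by
  have hderiv : ‖(X ^ 2 - C a).derivative.aeval a₀‖ = 1 := by
    have h₀ : ‖a₀‖ = 1 := (norm_le_one a₀).eq_or_lt.resolve_right
      (by rwa [norm_lt_one_iff_toZMod_eq_zero])
    have h2a : (X ^ 2 - C a).derivative.aeval a₀ = 2 * a₀ := by
      simp [one_add_one_eq_two]
    rw [h2a, norm_mul, isUnit_iff.1 (isUnit_two hp), h₀, one_mul]
  have hval : ‖(X ^ 2 - C a).aeval a₀‖ < ‖(X ^ 2 - C a).derivative.aeval a₀‖ ^ 2 := by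
    rw [hderiv, one_pow, norm_lt_one_iff_toZMod_eq_zero]
    simp [h]
  obtain ⟨z, hz, -⟩ := hensels_lemma hval
  exact ⟨z, by simpa [sub_eq_zero] using hz⟩

lemma exists_sq_add_sq_eq_neg_one (hp : p ≠ 2) : ∃ α β : ℤ_[p], α ^ 2 + β ^ 2 = -1 := by
  obtain ⟨a, b, hab, ha⟩ : ∃ a b : ZMod p, a ^ 2 + b ^ 2 = -1 ∧ a ≠ 0 := by
    obtain ⟨a, b, hab⟩ := ZMod.sq_add_sq p (-1)
    rcases eq_or_ne a 0 with rfl | ha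
    · refine ⟨b, 0, by simpa using hab, ?_⟩
      rintro rfl
      simp at hab
    · exact ⟨a, b, hab, ha⟩
  have lift : ∀ x : ZMod p, toZMod (x.val : ℤ_[p]) = x := fun x => by
    rw [map_natCast, ZMod.natCast_zmod_val]
  obtain ⟨α, hα⟩ := exists_sq_eq_of_toZMod_eq hp (a₀ := a.val) (a := -1 - (b.val : ℤ_[p]) ^ 2)
    (by rwa [lift])
    (by simp only [map_pow, map_sub, map_neg, map_one, lift]; linear_combination hab)
  exact ⟨α, b.val, by rw [hα]; ring⟩

lemma eq_zero_of_forall_pow_dvd {x : ℤ_[p]} (h : ∀ n : ℕ, (p : ℤ_[p]) ^ n ∣ x) : x = 0 := by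
  have hx : x ∈ ⨅ n : ℕ, maximalIdeal ℤ_[p] ^ n := Submodule.mem_iInf _ |>.2 fun n => by
    rw [maximalIdeal_eq_span_p, Ideal.span_singleton_pow, Ideal.mem_span_singleton]
    exact h n
  rwa [Ideal.iInf_pow_eq_bot_of_isLocalRing _ (maximalIdeal.isMaximal _).ne_top,
    Ideal.mem_bot] at hx

noncomputable def divP : Ideal.span {(p : ℤ_[p])} →ₗ[ℤ_[p]] ℤ_[p] :=
  (LinearEquiv.toSpanNonzeroSingleton ℤ_[p] ℤ_[p] p prime_p.ne_zero).symm

lemma p_mul_divP (x : Ideal.span {(p : ℤ_[p])}) : p * divP x = x :=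
  (mul_comm _ _).trans <| congrArg Subtype.val
    ((LinearEquiv.toSpanNonzeroSingleton ℤ_[p] ℤ_[p] p prime_p.ne_zero).apply_symm_apply x)

lemma index_span_p : (Ideal.span {(p : ℤ_[p])}).toAddSubgroup.index = p := by
  have hsurj : Function.Surjective (toZMod : ℤ_[p] →+* ZMod p) := fun x =>
    ⟨x.val, by rw [map_natCast, ZMod.natCast_zmod_val]⟩
  have hker : (toZMod : ℤ_[p] →+* ZMod p).toAddMonoidHom.ker =
      (Ideal.span {(p : ℤ_[p])}).toAddSubgroup := by
    ext x
    rw [AddMonoidHom.mem_ker, Submodule.mem_toAddSubgroup, ← maximalIdeal_eq_span_p,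
      ← ker_toZMod]
    rfl
  rw [← hker, AddSubgroup.index_ker, AddMonoidHom.range_eq_top.2 hsurj, AddSubgroup.card_top,
    Nat.card_zmod]

end PadicInt

section ScaledSl2

variable {R L : Type*} [CommRing R] [AddCommGroup L] [Module R L]
  {f : L →ₗ[R] L →ₗ[R] L}

lemma bracket_skew (hf : ∀ z, f z z = 0) (u v : L) : f u v = -f v u := by
  have h := hf (u + v)
  simp only [map_add, LinearMap.add_apply, hf, zero_add, add_zero] at h
  exact eq_neg_of_add_eq_zero_right h

lemma bracket_add_smul_three_eq_cross (hf : ∀ z, f z z = 0) (x₀ x₁ x₂ : L)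
    (a₀ a₁ a₂ c₀ c₁ c₂ : R) :
    f (a₀ • x₀ + a₁ • x₁ + a₂ • x₂) (c₀ • x₀ + c₁ • x₁ + c₂ • x₂) =
      (a₁ * c₂ - a₂ * c₁) • f x₁ x₂ + (a₂ * c₀ - a₀ * c₂) • f x₂ x₀ +
        (a₀ * c₁ - a₁ * c₀) • f x₀ x₁ := by
  simp only [map_add, map_smul, LinearMap.add_apply, LinearMap.smul_apply, hf,
    bracket_skew hf x₁ x₀, bracket_skew hf x₀ x₂, bracket_skew hf x₂ x₁]
  module

lemma Module.Basis.sum_coord_smul_three (c : Module.Basis (Fin 3) R L) (u : L) :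
    c.coord 0 u • c 0 + c.coord 1 u • c 1 + c.coord 2 u • c 2 = u := by
  conv_rhs => rw [← c.sum_repr u]
  simp only [Fin.sum_univ_three, Module.Basis.coord_apply]

/-- `c = (e, f, h)` with `[f, h] = r f`, `[h, e] = r e`, `[e, f] = s h`: an `sl₂`-triple up to
scaling. -/
structure IsScaledSl2Basis (f : L →ₗ[R] L →ₗ[R] L) (c : Module.Basis (Fin 3) R L) (r s : R) :
    Prop where
  self_eq_zero : ∀ z, f z z = 0
  one_two : f (c 1) (c 2) = r • c 1
  two_zero : f (c 2) (c 0) = r • c 0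
  zero_one : f (c 0) (c 1) = s • c 2

namespace IsScaledSl2Basis

variable {c : Module.Basis (Fin 3) R L} {r s : R} (u v : L)

lemma bracket_eq (hc : IsScaledSl2Basis f c r s) : f u v =
    (r * (c.coord 2 u * c.coord 0 v - c.coord 0 u * c.coord 2 v)) • c 0 +
      (r * (c.coord 1 u * c.coord 2 v - c.coord 2 u * c.coord 1 v)) • c 1 +
        (s * (c.coord 0 u * c.coord 1 v - c.coord 1 u * c.coord 0 v)) • c 2 := by
  conv_lhs => rw [← c.sum_coord_smul_three u, ← c.sum_coord_smul_three v,
    bracket_add_smul_three_eq_cross hc.self_eq_zero, hc.one_two, hc.two_zero, hc.zero_one]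
  module

lemma coord_zero_bracket (hc : IsScaledSl2Basis f c r s) :
    c.coord 0 (f u v) = r * (c.coord 2 u * c.coord 0 v - c.coord 0 u * c.coord 2 v) := by
  simp [hc.bracket_eq u v]

lemma coord_one_bracket (hc : IsScaledSl2Basis f c r s) :
    c.coord 1 (f u v) = r * (c.coord 1 u * c.coord 2 v - c.coord 2 u * c.coord 1 v) := by
  simp [hc.bracket_eq u v]

lemma coord_two_bracket (hc : IsScaledSl2Basis f c r s) :
    c.coord 2 (f u v) = s * (c.coord 0 u * c.coord 1 v - c.coord 1 u * c.coord 0 v) := by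
  simp [hc.bracket_eq u v]

end IsScaledSl2Basis

lemma exists_isScaledSl2Basis_of_so3 (hf : ∀ z, f z z = 0) (b : Module.Basis (Fin 3) R L)
    {P α β : R} (hαβ : α ^ 2 + β ^ 2 = -1) (h2 : IsUnit (2 : R))
    (hb : f (b 1) (b 2) = P • b 0 ∧ f (b 2) (b 0) = P • b 1 ∧ f (b 0) (b 1) = P • b 2) :
    ∃ c : Module.Basis (Fin 3) R L, IsScaledSl2Basis f c P (-2 * P) := by
  obtain ⟨h12, h20, h01⟩ := hb
  let A : Matrix (Fin 3) (Fin 3) R := !![1, 1, 0; α, -α, -β; β, -β, α]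
  have hA : IsUnit A.det := by
    have hdet : A.det = 2 := by
      rw [Matrix.det_fin_three]
      simp only [A, Matrix.of_apply, Matrix.cons_val', Matrix.cons_val_zero,
        Matrix.cons_val_one, Matrix.cons_val, Matrix.cons_val_fin_one]
      linear_combination -2 * hαβ
    rwa [hdet]
  let c := b.map (A.toLinearEquiv b hA)
  have he : c 0 = (1 : R) • b 0 + α • b 1 + β • b 2 := by
    simp [c, A, Matrix.toLin_self, Fin.sum_univ_three]
  have hg : c 1 = (1 : R) • b 0 + (-α) • b 1 + (-β) • b 2 := by
    simp [c, A, Matrix.toLin_self, Fin.sum_univ_three]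
  have hm : c 2 = (0 : R) • b 0 + (-β) • b 1 + α • b 2 := by
    simp [c, A, Matrix.toLin_self, Fin.sum_univ_three]
  refine ⟨c, hf, ?_, ?_, ?_⟩ <;>
    simp only [he, hg, hm, bracket_add_smul_three_eq_cross hf, h12, h20, h01]
  · linear_combination (norm := module) (-P * hαβ) • b 0
  · linear_combination (norm := module) (-P * hαβ) • b 0
  · module

end ScaledSl2

section SelfSimilar

variable {p : ℕ} [Fact p.Prime] {L : Type*} [AddCommGroup L] [Module ℤ_[p] L]

def IsSelfSimilarOfIndex (f : L →ₗ[ℤ_[p]] L →ₗ[ℤ_[p]] L) (n : ℕ) : Prop :=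
  ∃ M : Submodule ℤ_[p] L,
    (∀ a ∈ M, ∀ c ∈ M, f a c ∈ M) ∧
    M.toAddSubgroup.index = n ∧
    ∃ φ : M →ₗ[ℤ_[p]] L,
      (∀ u v : M, ∀ h : f u v ∈ M, φ ⟨f u v, h⟩ = f (φ u) (φ v)) ∧
      ∀ I : Submodule ℤ_[p] L, (∀ z : L, ∀ y ∈ I, f z y ∈ I) →
        ∀ hle : I ≤ M, (∀ y (hy : y ∈ I), φ ⟨y, hle hy⟩ ∈ I) → I = ⊥

namespace Module.Basis

variable (c : Module.Basis (Fin 3) ℤ_[p] L)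

noncomputable def sl2Domain : Submodule ℤ_[p] L :=
  Submodule.comap (c.coord 0) (Ideal.span {(p : ℤ_[p])})

/-- Divides the `e`-coordinate by `p` and multiplies the `f`-coordinate by `p`: the restriction of
conjugation by `diag(1, p)` on `sl₂(ℚ_p)`, hence a Lie morphism. -/
noncomputable def sl2VirtualEndo : c.sl2Domain →ₗ[ℤ_[p]] L :=
  (PadicInt.divP ∘ₗ (c.coord 0).restrict fun _ hx => hx).smulRight (c 0) +
    ((p : ℤ_[p]) • (c.coord 1).domRestrict c.sl2Domain).smulRight (c 1) +
      ((c.coord 2).domRestrict c.sl2Domain).smulRight (c 2)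

lemma index_sl2Domain : c.sl2Domain.toAddSubgroup.index = p := by
  have h : c.sl2Domain.toAddSubgroup =
      (Ideal.span {(p : ℤ_[p])}).toAddSubgroup.comap (c.coord 0).toAddMonoidHom := rfl
  rw [h, AddSubgroup.index_comap_of_surjective _ fun t => ⟨t • c 0, by simp⟩,
    PadicInt.index_span_p]

lemma p_mul_coord_zero_sl2VirtualEndo (v : c.sl2Domain) :
    p * c.coord 0 (c.sl2VirtualEndo v) = c.coord 0 v := by
  have h : c.coord 0 (c.sl2VirtualEndo v) = PadicInt.divP ⟨c.coord 0 v, v.2⟩ := by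
    simp [sl2VirtualEndo]
    rfl
  rw [h, PadicInt.p_mul_divP]

lemma coord_one_sl2VirtualEndo (v : c.sl2Domain) :
    c.coord 1 (c.sl2VirtualEndo v) = p * c.coord 1 v := by
  simp [sl2VirtualEndo]

lemma coord_two_sl2VirtualEndo (v : c.sl2Domain) :
    c.coord 2 (c.sl2VirtualEndo v) = c.coord 2 v := by
  simp [sl2VirtualEndo]

end Module.Basis

namespace IsScaledSl2Basis

variable {f : L →ₗ[ℤ_[p]] L →ₗ[ℤ_[p]] L} {c : Module.Basis (Fin 3) ℤ_[p] L} {r s : ℤ_[p]}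

lemma bracket_mem_sl2Domain (hc : IsScaledSl2Basis f c r s) :
    ∀ u ∈ c.sl2Domain, ∀ v ∈ c.sl2Domain, f u v ∈ c.sl2Domain := fun u hu v hv => by
  simp only [Module.Basis.sl2Domain, Submodule.mem_comap] at hu hv ⊢
  rw [hc.coord_zero_bracket]
  exact Ideal.mul_mem_left _ _ (Ideal.sub_mem _ (Ideal.mul_mem_left _ _ hv)
    (Ideal.mul_mem_right _ _ hu))

lemma sl2VirtualEndo_bracket (hc : IsScaledSl2Basis f c r s) (u v : c.sl2Domain)
    (h : f u v ∈ c.sl2Domain) :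
    c.sl2VirtualEndo ⟨f u v, h⟩ = f (c.sl2VirtualEndo u) (c.sl2VirtualEndo v) := by
  have hp : (p : ℤ_[p]) ≠ 0 := PadicInt.prime_p.ne_zero
  refine c.ext_elem_iff.2 fun i => ?_
  fin_cases i
  · show c.coord 0 _ = c.coord 0 _
    refine mul_left_cancel₀ hp ?_
    rw [c.p_mul_coord_zero_sl2VirtualEndo, hc.coord_zero_bracket, hc.coord_zero_bracket,
      ← c.p_mul_coord_zero_sl2VirtualEndo u, ← c.p_mul_coord_zero_sl2VirtualEndo v,
      c.coord_two_sl2VirtualEndo, c.coord_two_sl2VirtualEndo]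
    ring
  · show c.coord 1 _ = c.coord 1 _
    rw [c.coord_one_sl2VirtualEndo, hc.coord_one_bracket, hc.coord_one_bracket,
      c.coord_one_sl2VirtualEndo, c.coord_one_sl2VirtualEndo, c.coord_two_sl2VirtualEndo,
      c.coord_two_sl2VirtualEndo]
    ring
  · show c.coord 2 _ = c.coord 2 _
    rw [c.coord_two_sl2VirtualEndo, hc.coord_two_bracket, hc.coord_two_bracket,
      c.coord_one_sl2VirtualEndo, c.coord_one_sl2VirtualEndo,
      ← c.p_mul_coord_zero_sl2VirtualEndo u, ← c.p_mul_coord_zero_sl2VirtualEndo v]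
    ring

lemma eq_bot_of_le_sl2Domain (hc : IsScaledSl2Basis f c r s) (hr : r ≠ 0) (hs : s ≠ 0)
    (I : Submodule ℤ_[p] L) (hI : ∀ z : L, ∀ y ∈ I, f z y ∈ I) (hle : I ≤ c.sl2Domain)
    (hφ : ∀ y (hy : y ∈ I), c.sl2VirtualEndo ⟨y, hle hy⟩ ∈ I) : I = ⊥ := by
  have h0 : ∀ y ∈ I, c.coord 0 y = 0 := fun y hy =>
    PadicInt.eq_zero_of_forall_pow_dvd fun n => by
      induction n generalizing y with
      | zero => exact one_dvd _
      | succ n ih =>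
        rw [← c.p_mul_coord_zero_sl2VirtualEndo ⟨y, hle hy⟩, pow_succ']
        exact mul_dvd_mul_left _ (ih _ (hφ y hy))
  have h2 : ∀ y ∈ I, c.coord 2 y = 0 := fun y hy => by
    have h := h0 _ (hI (c 0) y hy)
    rw [hc.coord_zero_bracket, h0 y hy] at h
    simpa [hr] using h
  have h1 : ∀ y ∈ I, c.coord 1 y = 0 := fun y hy => by
    have h := h2 _ (hI (c 0) y hy)
    rw [hc.coord_two_bracket, h0 y hy] at h
    simpa [hs] using h
  refine (Submodule.eq_bot_iff I).2 fun y hy => c.forall_coord_eq_zero_iff.1 fun i => ?_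
  fin_cases i
  exacts [h0 y hy, h1 y hy, h2 y hy]

theorem isSelfSimilarOfIndex (hc : IsScaledSl2Basis f c r s) (hr : r ≠ 0) (hs : s ≠ 0) :
    IsSelfSimilarOfIndex f p :=
  ⟨c.sl2Domain, hc.bracket_mem_sl2Domain, c.index_sl2Domain, c.sl2VirtualEndo,
    hc.sl2VirtualEndo_bracket, hc.eq_bot_of_le_sl2Domain hr hs⟩

end IsScaledSl2Basis

end SelfSimilar

theorem stmt19_general (p : ℕ) [Fact p.Prime] (hp3 : 3 ≤ p) {L : Type*} [AddCommGroup L]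
    [Module ℤ_[p] L]
    (f : L →ₗ[ℤ_[p]] L →ₗ[ℤ_[p]] L) (hanti : ∀ z : L, f z z = 0)
    (b : Module.Basis (Fin 3) ℤ_[p] L) (s₀ : ℕ)
    (hbr : f (b 1) (b 2) = (p : ℤ_[p]) ^ s₀ • b 0 ∧
           f (b 2) (b 0) = (p : ℤ_[p]) ^ s₀ • b 1 ∧
           f (b 0) (b 1) = (p : ℤ_[p]) ^ s₀ • b 2) :
    -- `L` is self-similar of index `p`: it admits a simple virtual endomorphism of index `p`
    ∃ M : Submodule ℤ_[p] L,
      (∀ a ∈ M, ∀ c ∈ M, f a c ∈ M) ∧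
      M.toAddSubgroup.index = p ∧
      ∃ φ : M →ₗ[ℤ_[p]] L,
        (∀ u v : M, ∀ h : f u v ∈ M, φ ⟨f u v, h⟩ = f (φ u) (φ v)) ∧
        ∀ I : Submodule ℤ_[p] L, (∀ z : L, ∀ y ∈ I, f z y ∈ I) →
          ∀ hle : I ≤ M, (∀ y (hy : y ∈ I), φ ⟨y, hle hy⟩ ∈ I) → I = ⊥ := by
  have hp2 : p ≠ 2 := by omega
  have hP : (p : ℤ_[p]) ^ s₀ ≠ 0 := pow_ne_zero _ PadicInt.prime_p.ne_zero
  obtain ⟨α, β, hαβ⟩ := PadicInt.exists_sq_add_sq_eq_neg_one hp2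
  obtain ⟨c, hc⟩ := exists_isScaledSl2Basis_of_so3 hanti b hαβ (PadicInt.isUnit_two hp2) hbr
  exact hc.isSelfSimilarOfIndex hP (mul_ne_zero (neg_ne_zero.2 two_ne_zero) hP)

theorem stmt19 (p : ℕ) [Fact p.Prime] (hp3 : 3 ≤ p) {L : Type*} [AddCommGroup L]
    [Module ℤ_[p] L]
    (f : L →ₗ[ℤ_[p]] L →ₗ[ℤ_[p]] L) (hanti : ∀ z : L, f z z = 0)
    (hjacobi : ∀ x y z : L, f (f x y) z + f (f z x) y + f (f y z) x = 0)
    (b : Module.Basis (Fin 3) ℤ_[p] L) (s₀ : ℕ)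
    (hbr : f (b 1) (b 2) = (p : ℤ_[p]) ^ s₀ • b 0 ∧
           f (b 2) (b 0) = (p : ℤ_[p]) ^ s₀ • b 1 ∧
           f (b 0) (b 1) = (p : ℤ_[p]) ^ s₀ • b 2) :
    -- `L` is self-similar of index `p`: it admits a simple virtual endomorphism of index `p`
    ∃ M : Submodule ℤ_[p] L,
      (∀ a ∈ M, ∀ c ∈ M, f a c ∈ M) ∧
      M.toAddSubgroup.index = p ∧
      ∃ φ : M →ₗ[ℤ_[p]] L,
        (∀ u v : M, ∀ h : f u v ∈ M, φ ⟨f u v, h⟩ = f (φ u) (φ v)) ∧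
        ∀ I : Submodule ℤ_[p] L, (∀ z : L, ∀ y ∈ I, f z y ∈ I) →
          ∀ hle : I ≤ M, (∀ y (hy : y ∈ I), φ ⟨y, hle hy⟩ ∈ I) → I = ⊥ :=
  stmt19_general p hp3 f hanti b s₀ hbr
end
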